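/- arXiv:2503.15122 — 7 statements merged into one kernel-verified Lean document; each statement's English description precedes it below -/
import Mathlib

section
/- Let Q be a real-rooted polynomial with all zeros simple, and let P be a real polynomial with deg P ≤ deg Q + 1. If the Wronskian W(P,Q;x) = P(x)Q'(x) - P'(x)Q(x) is nonzero for every real x, then the zeros of P and Q strictly interlace: all zeros of both are real and simple, they share no common zero, and between any two consecutive zeros of one polynomial lies exactly one zero of the other. -/
open Polynomial

/-- All zeros of `P` (viewed over `ℂ`) are real, and each real zero is simple. -/
def RealRootedSimple (P : Polynomial ℝ) : Prop :=
  (∀ z : ℂ, (P.map (algebraMap ℝ ℂ)).IsRoot z → z.im = 0) ∧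
    ∀ x : ℝ, P.rootMultiplicity x ≤ 1

/-- Strict interlacing of the zeros of two real polynomials: all zeros real and simple,
no common zeros, and between any two consecutive zeros of one polynomial lies exactly one
zero of the other. -/
def StrictInterlace (P Q : Polynomial ℝ) : Prop :=
  RealRootedSimple P ∧ RealRootedSimple Q ∧
    (∀ x : ℝ, ¬(P.IsRoot x ∧ Q.IsRoot x)) ∧
    (∀ a b : ℝ, a < b → P.IsRoot a → P.IsRoot b →
      (∀ c ∈ Set.Ioo a b, ¬ P.IsRoot c) →
      ∃! c : ℝ, c ∈ Set.Ioo a b ∧ Q.IsRoot c) ∧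
    (∀ a b : ℝ, a < b → Q.IsRoot a → Q.IsRoot b →
      (∀ c ∈ Set.Ioo a b, ¬ Q.IsRoot c) →
      ∃! c : ℝ, c ∈ Set.Ioo a b ∧ P.IsRoot c)

/-!
Where `p` does not vanish, `(q / p)' = W(p, q) / p²`. So Rolle's theorem puts a zero of `p`
strictly between any two zeros of `q`, and symmetrically; with `W ≠ 0` this gives the interlacing,
while simplicity and the absence of common zeros are immediate from `W = p q' - p' q`.
Real-rootedness of `p` is a count of its distinct real zeros: `deg q - 1` of them lie between the
zeros of `q`, and if `deg p = deg q + 1` one more lies beyond the largest zero of `q` (Rolle on a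
half-line, as `q / p → 0`). A non-real zero and its conjugate would then exceed `deg p`.
-/

open Filter Set Topology

theorem exists_hasDerivAt_eq_zero_Ioi {f f' : ℝ → ℝ} {a : ℝ} (hfc : ContinuousOn f (Ici a))
    (hff' : ∀ x ∈ Ioi a, HasDerivAt f (f' x) x) (hlim : Tendsto f atTop (𝓝 (f a))) :
    ∃ c ∈ Ioi a, f' c = 0 := by
  -- By Darboux `f'` has constant sign, so `f` is strictly monotone and cannot return to `f a`.
  by_contra! hne
  have hderiv : ∀ x ∈ interior (Ici a), HasDerivWithinAt f (f' x) (interior (Ici a)) x := by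
    rw [interior_Ici]
    exact fun x hx => (hff' x hx).hasDerivWithinAt
  have hb : a + 1 ∈ Ici a := by simp
  have hab : a < a + 1 := by linarith
  have hfar : ∀ᶠ t in atTop, a + 1 ≤ t := eventually_ge_atTop (a + 1)
  rcases hasDerivWithinAt_forall_lt_or_forall_gt_of_forall_ne (convex_Ioi a)
    (fun x hx => (hff' x hx).hasDerivWithinAt) hne with hneg | hpos
  · have hanti := strictAntiOn_of_hasDerivWithinAt_neg (convex_Ici a) hfc hderiv
      (by rwa [interior_Ici])
    have hle : f a ≤ f (a + 1) := le_of_tendsto hlim <| hfar.mono fun t ht =>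
      hanti.antitoneOn hb (hb.trans ht) ht
    linarith [hanti self_mem_Ici hb hab]
  · have hmono := strictMonoOn_of_hasDerivWithinAt_pos (convex_Ici a) hfc hderiv
      (by rwa [interior_Ici])
    have hle : f (a + 1) ≤ f a := ge_of_tendsto hlim <| hfar.mono fun t ht =>
      hmono.monotoneOn hb (hb.trans ht) ht
    linarith [hmono self_mem_Ici hb hab]

namespace Polynomial

section CommRing

variable {R : Type*} [CommRing R] {p q : R[X]} {x : R}

theorem eval_wronskian (p q : R[X]) (x : R) :
    (wronskian p q).eval x =
      p.eval x * (derivative q).eval x - (derivative p).eval x * q.eval x := by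
  simp [wronskian]

theorem left_ne_zero_of_eval_wronskian_ne_zero (hW : (wronskian p q).eval x ≠ 0) : p ≠ 0 := by
  rintro rfl
  simp [wronskian_zero_left] at hW

theorem right_ne_zero_of_eval_wronskian_ne_zero (hW : (wronskian p q).eval x ≠ 0) : q ≠ 0 := by
  rintro rfl
  simp [wronskian_zero_right] at hW

theorem not_isRoot_and_isRoot_of_eval_wronskian_ne_zero (hW : (wronskian p q).eval x ≠ 0) :
    ¬(p.IsRoot x ∧ q.IsRoot x) := by
  rintro ⟨hp, hq⟩
  exact hW (by rw [eval_wronskian, hp.eq_zero, hq.eq_zero]; ring)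

theorem rootMultiplicity_le_one_of_eval_wronskian_ne_zero (hW : (wronskian p q).eval x ≠ 0) :
    p.rootMultiplicity x ≤ 1 := by
  by_contra! h
  obtain ⟨h0, h1⟩ :=
    (one_lt_rootMultiplicity_iff_isRoot (left_ne_zero_of_eval_wronskian_ne_zero hW)).mp h
  exact hW (by rw [eval_wronskian, h0.eq_zero, h1.eq_zero]; ring)

theorem eval_wronskian_swap_ne_zero (hW : (wronskian p q).eval x ≠ 0) :
    (wronskian q p).eval x ≠ 0 := by
  rwa [← wronskian_neg_eq, eval_neg, neg_ne_zero]

end CommRing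

theorem hasDerivAt_eval_div_eval (p q : ℝ[X]) {x : ℝ} (hx : p.eval x ≠ 0) :
    HasDerivAt (fun y => q.eval y / p.eval y) ((wronskian p q).eval x / p.eval x ^ 2) x :=
  ((q.hasDerivAt x).div (p.hasDerivAt x) hx).congr_deriv (by rw [eval_wronskian]; ring)

theorem exists_isRoot_Ioo_of_eval_wronskian_ne_zero (p q : ℝ[X]) {a b : ℝ} (hab : a < b)
    (ha : q.IsRoot a) (hb : q.IsRoot b) (hW : ∀ x ∈ Icc a b, (wronskian p q).eval x ≠ 0) :
    ∃ c ∈ Ioo a b, p.IsRoot c := by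
  by_contra! hp
  have hp' : ∀ x ∈ Icc a b, p.eval x ≠ 0 := by
    intro x hx hx0
    rcases eq_endpoints_or_mem_Ioo_of_mem_Icc hx with rfl | rfl | hx'
    · exact not_isRoot_and_isRoot_of_eval_wronskian_ne_zero (hW x hx) ⟨hx0, ha⟩
    · exact not_isRoot_and_isRoot_of_eval_wronskian_ne_zero (hW x hx) ⟨hx0, hb⟩
    · exact hp x hx' hx0
  obtain ⟨c, hc, hc0⟩ := exists_hasDerivAt_eq_zero hab
    (fun x hx => (hasDerivAt_eval_div_eval p q (hp' x hx)).continuousAt.continuousWithinAt)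
    (by simp [ha.eq_zero, hb.eq_zero])
    (fun x hx => hasDerivAt_eval_div_eval p q (hp' x (Ioo_subset_Icc_self hx)))
  rw [div_eq_zero_iff, pow_eq_zero_iff two_ne_zero] at hc0
  exact hc0.elim (hW c (Ioo_subset_Icc_self hc)) (hp' c (Ioo_subset_Icc_self hc))

theorem exists_isRoot_gt_of_eval_wronskian_ne_zero (p q : ℝ[X]) (hdeg : q.degree < p.degree)
    {a : ℝ} (ha : q.IsRoot a) (hW : ∀ x ∈ Ici a, (wronskian p q).eval x ≠ 0) :
    ∃ c > a, p.IsRoot c := by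
  by_contra! hp
  have hp' : ∀ x ∈ Ici a, p.eval x ≠ 0 := by
    intro x hx hx0
    rcases eq_or_lt_of_le (mem_Ici.mp hx) with rfl | hx'
    · exact not_isRoot_and_isRoot_of_eval_wronskian_ne_zero (hW _ hx) ⟨hx0, ha⟩
    · exact hp x hx' hx0
  obtain ⟨c, hc, hc0⟩ := exists_hasDerivAt_eq_zero_Ioi
    (fun x hx => (hasDerivAt_eval_div_eval p q (hp' x hx)).continuousAt.continuousWithinAt)
    (fun x hx => hasDerivAt_eval_div_eval p q (hp' x (Ioi_subset_Ici_self hx)))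
    (by simpa [ha.eq_zero] using div_tendsto_atTop_zero_of_degree_lt q p hdeg)
  rw [div_eq_zero_iff, pow_eq_zero_iff two_ne_zero] at hc0
  exact hc0.elim (hW c (Ioi_subset_Ici_self hc)) (hp' c (Ioi_subset_Ici_self hc))

theorem existsUnique_isRoot_Ioo_of_eval_wronskian_ne_zero {p q : ℝ[X]}
    (hW : ∀ x, (wronskian p q).eval x ≠ 0) {a b : ℝ} (hab : a < b) (ha : q.IsRoot a)
    (hb : q.IsRoot b) (hq : ∀ c ∈ Ioo a b, ¬ q.IsRoot c) :
    ∃! c, c ∈ Ioo a b ∧ p.IsRoot c := by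
  obtain ⟨c, hc, hpc⟩ :=
    exists_isRoot_Ioo_of_eval_wronskian_ne_zero p q hab ha hb fun x _ => hW x
  refine ⟨c, ⟨hc, hpc⟩, fun d ⟨hd, hpd⟩ => ?_⟩
  by_contra hdc
  have hW' : ∀ x, (wronskian q p).eval x ≠ 0 := fun x => eval_wronskian_swap_ne_zero (hW x)
  rcases lt_or_gt_of_ne hdc with h | h
  · obtain ⟨e, he, hqe⟩ :=
      exists_isRoot_Ioo_of_eval_wronskian_ne_zero q p h hpd hpc fun x _ => hW' x
    exact hq e ⟨hd.1.trans he.1, he.2.trans hc.2⟩ hqe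
  · obtain ⟨e, he, hqe⟩ :=
      exists_isRoot_Ioo_of_eval_wronskian_ne_zero q p h hpc hpd fun x _ => hW' x
    exact hq e ⟨hc.1.trans he.1, he.2.trans hd.2⟩ hqe

theorem card_roots_eq_natDegree_of_forall_im_eq_zero {p : ℝ[X]}
    (h : ∀ z : ℂ, (p.map (algebraMap ℝ ℂ)).IsRoot z → z.im = 0) :
    Multiset.card p.roots = p.natDegree := by
  classical
  have hreal : (p.map (algebraMap ℝ ℂ)).roots.filter (· ∈ (algebraMap ℝ ℂ).range) =
      (p.map (algebraMap ℝ ℂ)).roots :=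
    Multiset.filter_eq_self.mpr fun z hz =>
      ⟨z.re, Complex.ext (by simp) (by simp [h z (mem_roots'.mp hz).2])⟩
  rw [filter_roots_map_range_eq_map_roots (algebraMap ℝ ℂ).injective] at hreal
  rw [← Multiset.card_map (algebraMap ℝ ℂ), hreal, IsAlgClosed.card_roots_eq_natDegree,
    natDegree_map]

theorem card_roots_toFinset_add_two_le {p : ℝ[X]} (hp : p ≠ 0) {z : ℂ}
    (hz : (p.map (algebraMap ℝ ℂ)).IsRoot z) (him : z.im ≠ 0) :
    p.roots.toFinset.card + 2 ≤ p.natDegree := by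
  set R := p.roots.toFinset.image ((↑) : ℝ → ℂ)
  have hR : ∀ w ∈ R, w.im = 0 := by
    simp only [R, Finset.mem_image]
    rintro w ⟨x, -, rfl⟩
    exact Complex.ofReal_im x
  have hconj : (p.map (algebraMap ℝ ℂ)).IsRoot (starRingEnd ℂ z) := by
    rw [IsRoot, eval_map_algebraMap, ← Complex.conjAe_coe, aeval_algHom_apply,
      ← eval_map_algebraMap, hz.eq_zero, map_zero]
  have hsub :
      insert z (insert (starRingEnd ℂ z) R) ⊆ (p.map (algebraMap ℝ ℂ)).roots.toFinset := by
    intro w hw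
    rw [Multiset.mem_toFinset, mem_roots (map_ne_zero hp)]
    rcases Finset.mem_insert.mp hw with rfl | hw
    · exact hz
    rcases Finset.mem_insert.mp hw with rfl | hw
    · exact hconj
    obtain ⟨x, hx, rfl⟩ := Finset.mem_image.mp hw
    rw [Multiset.mem_toFinset, mem_roots hp] at hx
    rw [IsRoot, ← Complex.coe_algebraMap, eval_map_apply, hx.eq_zero, map_zero]
  calc p.roots.toFinset.card + 2 = (insert z (insert (starRingEnd ℂ z) R)).card := by
        rw [Finset.card_insert_of_notMem, Finset.card_insert_of_notMem,
          Finset.card_image_of_injective _ Complex.ofReal_injective]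
        · exact fun h => him (by simpa using hR _ h)
        · intro h
          rcases Finset.mem_insert.mp h with h | h
          · have := congrArg Complex.im h
            rw [Complex.conj_im] at this
            exact him (by linarith)
          · exact him (hR _ h)
    _ ≤ (p.map (algebraMap ℝ ℂ)).roots.toFinset.card := Finset.card_le_card hsub
    _ ≤ Multiset.card (p.map (algebraMap ℝ ℂ)).roots := Multiset.toFinset_card_le _
    _ ≤ p.natDegree := card_roots_map_le_natDegree p

theorem card_roots_toFinset_le_card_filter_lt_add_one {p q : ℝ[X]}
    (hW : ∀ x, (wronskian p q).eval x ≠ 0) {a : ℝ} (ha : ∀ x, q.IsRoot x → x ≤ a) :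
    q.roots.toFinset.card ≤ (p.roots.toFinset.filter (· < a)).card + 1 := by
  have hp := left_ne_zero_of_eval_wronskian_ne_zero (hW 0)
  have hq := right_ne_zero_of_eval_wronskian_ne_zero (hW 0)
  refine Finset.card_le_of_interleaved fun x hx y hy hxy _ => ?_
  rw [Multiset.mem_toFinset, mem_roots hq] at hx hy
  obtain ⟨c, hc, hpc⟩ :=
    exists_isRoot_Ioo_of_eval_wronskian_ne_zero p q hxy hx hy fun t _ => hW t
  refine ⟨c, Finset.mem_filter.mpr ⟨?_, hc.2.trans_le (ha y hy)⟩, hc⟩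
  rwa [Multiset.mem_toFinset, mem_roots hp]

theorem forall_im_eq_zero_of_eval_wronskian_ne_zero {p q : ℝ[X]} (hq : RealRootedSimple q)
    (hdeg : p.natDegree ≤ q.natDegree + 1) (hW : ∀ x, (wronskian p q).eval x ≠ 0) (z : ℂ)
    (hz : (p.map (algebraMap ℝ ℂ)).IsRoot z) : z.im = 0 := by
  by_contra him
  have hp0 := left_ne_zero_of_eval_wronskian_ne_zero (hW 0)
  have hq0 := right_ne_zero_of_eval_wronskian_ne_zero (hW 0)
  have hS : q.roots.toFinset.card = q.natDegree := by
    rw [Multiset.toFinset_card_of_nodup, card_roots_eq_natDegree_of_forall_im_eq_zero hq.1]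
    exact Multiset.nodup_iff_count_le_one.mpr fun x => (count_roots q).trans_le (hq.2 x)
  have hT := card_roots_toFinset_add_two_le hp0 hz him
  have hS0 : q.roots.toFinset.Nonempty := by
    rw [← Finset.card_pos, hS]
    omega
  set a := q.roots.toFinset.max' hS0
  have hqa : q.IsRoot a := (mem_roots hq0).mp (Multiset.mem_toFinset.mp (Finset.max'_mem _ _))
  have hcount := card_roots_toFinset_le_card_filter_lt_add_one hW (a := a) fun x hx =>
    Finset.le_max' _ x (Multiset.mem_toFinset.mpr ((mem_roots hq0).mpr hx))
  rcases le_or_gt p.natDegree q.natDegree with hpq | hpq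
  · have := Finset.card_le_card (Finset.filter_subset (· < a) p.roots.toFinset)
    omega
  · obtain ⟨t, hat, hpt⟩ :=
      exists_isRoot_gt_of_eval_wronskian_ne_zero p q (degree_lt_degree hpq) hqa fun x _ => hW x
    have := Finset.card_lt_card (Finset.filter_ssubset (p := (· < a)).mpr
      ⟨t, Multiset.mem_toFinset.mpr ((mem_roots hp0).mpr hpt), hat.not_gt⟩)
    omega

end Polynomial

/-- If `Q` is real-rooted with simple zeros, `deg P ≤ deg Q + 1` and the Wronskian
`W(P,Q;x) = P(x)Q'(x) - P'(x)Q(x)` never vanishes on `ℝ`, then the zeros of `P` and `Q`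
strictly interlace. -/
theorem stmt0 (P Q : Polynomial ℝ) (hQ : RealRootedSimple Q)
    (hdeg : P.natDegree ≤ Q.natDegree + 1)
    (hW : ∀ x : ℝ,
      P.eval x * (derivative Q).eval x - (derivative P).eval x * Q.eval x ≠ 0) :
    StrictInterlace P Q := by
  have hPQ : ∀ x, (wronskian P Q).eval x ≠ 0 := fun x => by rw [eval_wronskian]; exact hW x
  have hQP : ∀ x, (wronskian Q P).eval x ≠ 0 := fun x => eval_wronskian_swap_ne_zero (hPQ x)
  exact ⟨⟨forall_im_eq_zero_of_eval_wronskian_ne_zero hQ hdeg hPQ,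
      fun x => rootMultiplicity_le_one_of_eval_wronskian_ne_zero (hPQ x)⟩, hQ,
    fun x => not_isRoot_and_isRoot_of_eval_wronskian_ne_zero (hPQ x),
    fun _ _ hab ha hb => existsUnique_isRoot_Ioo_of_eval_wronskian_ne_zero hQP hab ha hb,
    fun _ _ hab ha hb => existsUnique_isRoot_Ioo_of_eval_wronskian_ne_zero hPQ hab ha hb⟩
end

section
/- Let μ = (μ₁,...,μ_r) be a system of measures on ℝ with all moments finite, and suppose the multi-index n is normal for μ, with type II polynomial P_n. For z₀ ∈ ℂ, let (x−z₀)μ denote the system ((x−z₀)μ₁,...,(x−z₀)μ_r), where (x−z₀)μ_j is the measure with ∫ f d((x−z₀)μ_j) = ∫ f(x)(x−z₀) dμ_j(x). Then P_n(z₀) = 0 if and only if the index n is not normal for the system (x−z₀)μ. -/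
/-!
Write the orthogonality conditions of index `n` as `L S = 0` for a linear map `L` into a space
of dimension `N = |n|`. Normality of `n` means that no nonzero `S` with `deg S < N` has
`L S = 0`; the Christoffel transform replaces `L` by `S ↦ L((x - z₀) S)`. If `P(z₀) = 0`, then
`P / (x - z₀)` violates normality of the transformed system. Conversely, if some nonzero `D` with
`deg D < N` has `L((x - z₀) D) = 0`, then `(x - z₀) D` has degree `≤ N` and, by normality, is a
multiple of `P`, so `P(z₀) = 0`.
-/

open Polynomial MeasureTheory

/-- `P` is a type II multiple orthogonal polynomial at multi-index `n` for the system of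
(possibly complex) measures `w j dμ j`. -/
def IsTypeII {r : ℕ} (μ : Fin r → Measure ℝ) (w : Fin r → ℝ → ℂ) (n : Fin r → ℕ)
    (P : Polynomial ℂ) : Prop :=
  P.Monic ∧ P.natDegree = ∑ j, n j ∧
    ∀ j, ∀ k < n j, ∫ x : ℝ, P.eval (x : ℂ) * (x : ℂ) ^ k * w j x ∂(μ j) = 0

def NormalII {r : ℕ} (μ : Fin r → Measure ℝ) (w : Fin r → ℝ → ℂ) (n : Fin r → ℕ) : Prop :=
  ∃! P : Polynomial ℂ, IsTypeII μ w n P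

namespace Polynomial

section MonicInKer

variable {K V : Type*} [Field K] [AddCommGroup V] [Module K V]
  {L : K[X] →ₗ[K] V} {N : ℕ} {P D : K[X]}

def IsMonicInKer (L : K[X] →ₗ[K] V) (N : ℕ) (P : K[X]) : Prop :=
  P.Monic ∧ P.natDegree = N ∧ L P = 0

theorem IsMonicInKer.degree_eq (hP : IsMonicInKer L N P) : P.degree = N := by
  rw [degree_eq_natDegree hP.1.ne_zero, hP.2.1]

theorem IsMonicInKer.add_of_degree_lt (hP : IsMonicInKer L N P) (hD : D.degree < N)
    (hLD : L D = 0) : IsMonicInKer L N (P + D) := by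
  have hlt : D.degree < P.degree := hP.degree_eq ▸ hD
  exact ⟨hP.1.add_of_left hlt, by rw [natDegree_add_eq_left_of_degree_lt hlt, hP.2.1],
    by rw [map_add, hP.2.2, hLD, add_zero]⟩

theorem IsMonicInKer.eq_of_ker_trivial
    (hker : ∀ D : K[X], D.degree < N → L D = 0 → D = 0) {Q : K[X]}
    (hP : IsMonicInKer L N P) (hQ : IsMonicInKer L N Q) : P = Q := by
  by_contra hne
  have hlt : (P - Q).degree < N := hP.degree_eq ▸ degree_sub_lt_left
    (hP.degree_eq.trans hQ.degree_eq.symm) hP.1.ne_zero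
    (hP.1.leadingCoeff.trans hQ.1.leadingCoeff.symm)
  exact sub_ne_zero.2 hne (hker _ hlt (by rw [map_sub, hP.2.2, hQ.2.2, sub_zero]))

/-- A nonzero kernel element of degree at most `N` exists by counting dimensions; the
hypothesis on the kernel forces its degree to be exactly `N`. -/
theorem exists_isMonicInKer [FiniteDimensional K V] (hV : Module.finrank K V ≤ N)
    (hker : ∀ D : K[X], D.degree < N → L D = 0 → D = 0) : ∃ P, IsMonicInKer L N P := by
  have hdim : Module.finrank K V < Module.finrank K (degreeLT K (N + 1)) := by
    rw [Module.finrank_eq_card_basis (degreeLT.basis K (N + 1)), Fintype.card_fin]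
    omega
  obtain ⟨⟨Q, hQdeg⟩, hQker, hQ0⟩ :=
    Submodule.exists_mem_ne_zero_of_ne_bot (LinearMap.ker_ne_bot_of_finrank_lt
      (f := L.comp (degreeLT K (N + 1)).subtype) hdim)
  replace hQ0 : Q ≠ 0 := fun h => hQ0 (Subtype.ext h)
  replace hQker : L Q = 0 := hQker
  have hQnat : Q.natDegree = N := by
    have hle : Q.natDegree ≤ N := Nat.lt_succ_iff.1 <|
      (natDegree_lt_iff_degree_lt hQ0).2 (mem_degreeLT.1 hQdeg)
    refine hle.antisymm (not_lt.1 fun hlt => hQ0 (hker Q ?_ hQker))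
    exact (natDegree_lt_iff_degree_lt hQ0).1 hlt
  refine ⟨Q * C Q.leadingCoeff⁻¹, monic_mul_leadingCoeff_inv hQ0, ?_, ?_⟩
  · rw [natDegree_mul_C (inv_ne_zero (leadingCoeff_ne_zero.2 hQ0)), hQnat]
  · rw [mul_comm, ← smul_eq_C_mul, map_smul, hQker, smul_zero]

theorem existsUnique_isMonicInKer_iff [FiniteDimensional K V] (hV : Module.finrank K V ≤ N) :
    (∃! P, IsMonicInKer L N P) ↔ ∀ D : K[X], D.degree < N → L D = 0 → D = 0 := by
  constructor
  · rintro ⟨P, hP, huniq⟩ D hD hLD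
    simpa using huniq _ (hP.add_of_degree_lt hD hLD)
  · intro hker
    obtain ⟨P, hP⟩ := exists_isMonicInKer hV hker
    exact ⟨P, hP, fun Q hQ => hQ.eq_of_ker_trivial hker hP⟩

theorem IsMonicInKer.eq_coeff_smul (hker : ∀ D : K[X], D.degree < N → L D = 0 → D = 0)
    (hP : IsMonicInKer L N P) (hD : D.natDegree ≤ N) (hLD : L D = 0) :
    D = D.coeff N • P := by
  have hlt : (D - D.coeff N • P).degree < N := by
    refine (degree_lt_iff_coeff_zero _ _).2 fun m hm => ?_
    obtain rfl | hNm := (Nat.cast_le.1 hm).eq_or_lt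
    · have h1 : P.coeff N = 1 := hP.2.1 ▸ hP.1.coeff_natDegree
      simp [h1]
    · simp [coeff_eq_zero_of_natDegree_lt (hD.trans_lt hNm),
        coeff_eq_zero_of_natDegree_lt (hP.2.1.trans_lt hNm)]
  exact sub_eq_zero.1 (hker _ hlt (by rw [map_sub, map_smul, hLD, hP.2.2, smul_zero, sub_zero]))

theorem IsMonicInKer.eval_eq_zero_iff (hker : ∀ D : K[X], D.degree < N → L D = 0 → D = 0)
    (hP : IsMonicInKer L N P) (z : K) :
    P.eval z = 0 ↔ ∃ D ≠ 0, D.degree < (N : WithBot ℕ) ∧ L ((X - C z) * D) = 0 := by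
  constructor
  · intro hz
    have hfac := mul_divByMonic_eq_iff_isRoot.2 hz
    refine ⟨P /ₘ (X - C z), fun h => hP.1.ne_zero (by rw [← hfac, h, mul_zero]), ?_,
      by rw [hfac, hP.2.2]⟩
    exact (degree_divByMonic_lt _ _ hP.1.ne_zero
      (by rw [degree_X_sub_C]; exact zero_lt_one)).trans_eq hP.degree_eq
  · rintro ⟨D, hD0, hD, hLD⟩
    have hdeg : ((X - C z) * D).natDegree ≤ N := by
      rw [natDegree_mul (X_sub_C_ne_zero z) hD0, natDegree_X_sub_C]
      have := (natDegree_lt_iff_degree_lt hD0).2 hD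
      omega
    have hspan := hP.eq_coeff_smul hker hdeg hLD
    have hc : ((X - C z) * D).coeff N ≠ 0 := fun hc =>
      mul_ne_zero (X_sub_C_ne_zero z) hD0 (by rw [hspan, hc, zero_smul])
    have heval := congrArg (eval z) hspan
    rw [eval_mul, eval_sub, eval_X, eval_C, sub_self, zero_mul, eval_smul, smul_eq_mul] at heval
    exact (mul_eq_zero.1 heval.symm).resolve_left hc

end MonicInKer

end Polynomial

section Moments

theorem integrable_eval_ofReal {ν : Measure ℝ}
    (hmom : ∀ k : ℕ, Integrable (fun x : ℝ => x ^ k) ν) (S : ℂ[X]) :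
    Integrable (fun x : ℝ => S.eval (x : ℂ)) ν := by
  induction S using Polynomial.induction_on' with
  | add p q hp hq =>
    simp only [eval_add]
    exact hp.add hq
  | monomial i a => simpa using ((hmom i).ofReal (𝕜 := ℂ)).const_mul a

noncomputable def integralEval {ν : Measure ℝ}
    (hmom : ∀ k : ℕ, Integrable (fun x : ℝ => x ^ k) ν) : ℂ[X] →ₗ[ℂ] ℂ where
  toFun S := ∫ x : ℝ, S.eval (x : ℂ) ∂ν
  map_add' S T := by
    simp only [eval_add]
    exact integral_add (integrable_eval_ofReal hmom S) (integrable_eval_ofReal hmom T)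
  map_smul' c S := by
    simp only [eval_smul, smul_eq_mul, RingHom.id_apply]
    exact integral_const_mul c _

variable {r : ℕ} (μ : Fin r → Measure ℝ)
  (hmom : ∀ j, ∀ k : ℕ, Integrable (fun x : ℝ => x ^ k) (μ j)) (n : Fin r → ℕ)

/-- All moment conditions of index `n` at once: `S ↦ (∫ S(x) x^k dμ_j)_{j, k < n_j}`. -/
noncomputable def momentMap : ℂ[X] →ₗ[ℂ] ∀ j, Fin (n j) → ℂ :=
  LinearMap.pi fun j => LinearMap.pi fun k =>
    (integralEval (hmom j)).comp (LinearMap.mulRight ℂ (X ^ (k : ℕ)))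

theorem momentMap_eq_zero_iff (S : ℂ[X]) :
    momentMap μ hmom n S = 0 ↔
      ∀ j, ∀ k < n j, ∫ x : ℝ, S.eval (x : ℂ) * (x : ℂ) ^ k ∂(μ j) = 0 := by
  simp only [funext_iff, momentMap, LinearMap.pi_apply, LinearMap.comp_apply,
    LinearMap.mulRight_apply, integralEval, LinearMap.coe_mk, AddHom.coe_mk, eval_mul, eval_pow,
    eval_X, Pi.zero_apply, Fin.forall_iff]

theorem finrank_momentSpace : Module.finrank ℂ (∀ j, Fin (n j) → ℂ) = ∑ j, n j := by
  simp only [Module.finrank_pi_fintype, Module.finrank_self, Finset.sum_const, Finset.card_univ,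
    Fintype.card_fin, smul_eq_mul, mul_one]

theorem isTypeII_iff_isMonicInKer (W : ℂ[X]) (w : Fin r → ℝ → ℂ)
    (hw : ∀ j x, w j x = W.eval (x : ℂ)) (P : ℂ[X]) :
    IsTypeII μ w n P ↔
      IsMonicInKer ((momentMap μ hmom n).comp (LinearMap.mulLeft ℂ W)) (∑ j, n j) P := by
  simp only [IsTypeII, IsMonicInKer, LinearMap.comp_apply, LinearMap.mulLeft_apply,
    momentMap_eq_zero_iff, hw, eval_mul]
  simp_rw [mul_comm (eval _ W), mul_assoc, mul_comm (eval _ W)]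

end Moments

/-- Zero criterion for type II polynomials: if `n` is normal for `μ` with type II polynomial
`P`, then `P(z₀) = 0` iff `n` is not normal for the Christoffel transformed system
`((x-z₀)μ₁, ..., (x-z₀)μ_r)`. -/
theorem stmt5 (r : ℕ) (μ : Fin r → Measure ℝ)
    (hmom : ∀ j, ∀ k : ℕ, Integrable (fun x : ℝ => x ^ k) (μ j))
    (n : Fin r → ℕ) (P : Polynomial ℂ)
    (hnorm : NormalII μ (fun _ _ => 1) n) (hP : IsTypeII μ (fun _ _ => 1) n P)
    (z₀ : ℂ) :
    P.eval z₀ = 0 ↔ ¬ NormalII μ (fun _ x => (x : ℂ) - z₀) n := by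
  set L := momentMap μ hmom n
  have hdim := (finrank_momentSpace n).le
  have hone : ∀ Q, IsTypeII μ (fun _ _ => 1) n Q ↔ IsMonicInKer L (∑ j, n j) Q := by
    simpa only [LinearMap.mulLeft_one, LinearMap.comp_id] using
      isTypeII_iff_isMonicInKer μ hmom n 1 _ (fun _ _ => eval_one.symm)
  have hchristoffel : ∀ Q, IsTypeII μ (fun _ x => (x : ℂ) - z₀) n Q ↔
      IsMonicInKer (L.comp (LinearMap.mulLeft ℂ (X - C z₀))) (∑ j, n j) Q :=
    isTypeII_iff_isMonicInKer μ hmom n _ _ (fun _ _ => by simp)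
  have hker := (existsUnique_isMonicInKer_iff hdim).1 ((existsUnique_congr hone).1 hnorm)
  rw [((hone P).1 hP).eval_eq_zero_iff hker, NormalII, existsUnique_congr hchristoffel,
    existsUnique_isMonicInKer_iff hdim]
  simp only [LinearMap.comp_apply, LinearMap.mulLeft_apply, not_forall]
  tauto
end

section
/- Let μ = (μ₁,...,μ_r) be a system of measures on ℝ with all moments finite, n a multi-index normal for μ, and P_n the type II polynomial. If z₀ is a zero of P_n of multiplicity at least 2, then n is not normal for the system ((x−z₀)²μ₁,...,(x−z₀)²μ_r). -/
open Polynomial MeasureTheory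

lemma int_poly {r : ℕ} (μ : Fin r → Measure ℝ)
    (hmom : ∀ j, ∀ k : ℕ, Integrable (fun x : ℝ => x ^ k) (μ j))
    (R : Polynomial ℂ) (j : Fin r) :
    Integrable (fun x : ℝ => R.eval (x : ℂ)) (μ j) := by
  have h : (fun x : ℝ => R.eval (x : ℂ)) =
      fun x : ℝ => ∑ i ∈ Finset.range (R.natDegree + 1), R.coeff i * (x : ℂ) ^ i := by
    funext x; rw [Polynomial.eval_eq_sum_range]
  rw [h]
  apply integrable_finset_sum
  intro i _
  have h2 : Integrable (fun x : ℝ => ((x ^ i : ℝ) : ℂ)) (μ j) := (hmom j i).ofReal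
  have := h2.const_mul (R.coeff i)
  simpa using this

/-- If `n` is normal for `μ` with type II polynomial `P` and `z₀` is a zero of `P` of
multiplicity at least `2`, then `n` is not normal for the doubly Christoffel transformed
system `((x-z₀)²μ₁, ..., (x-z₀)²μ_r)`. -/
theorem stmt6 (r : ℕ) (μ : Fin r → Measure ℝ)
    (hmom : ∀ j, ∀ k : ℕ, Integrable (fun x : ℝ => x ^ k) (μ j))
    (n : Fin r → ℕ) (P : Polynomial ℂ)
    (hnorm : NormalII μ (fun _ _ => 1) n) (hP : IsTypeII μ (fun _ _ => 1) n P)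
    (z₀ : ℂ) (hmult : (X - C z₀) ^ 2 ∣ P) :
    ¬ NormalII μ (fun _ x => ((x : ℂ) - z₀) ^ 2) n := by
  obtain ⟨Q, hPQ⟩ := hmult
  have hPne : P ≠ 0 := hP.1.ne_zero
  have hQne : Q ≠ 0 := by rintro rfl; simp at hPQ; exact hPne hPQ
  have hdeg2 : ((X - C z₀) ^ 2 : Polynomial ℂ).natDegree = 2 := by
    simp [natDegree_pow]
  have hdegP : P.natDegree = 2 + Q.natDegree := by
    rw [hPQ, natDegree_mul (pow_ne_zero 2 (X_sub_C_ne_zero z₀)) hQne, hdeg2]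
  have hdegsum : ∑ j, n j = 2 + Q.natDegree := by rw [← hP.2.1, hdegP]
  -- orthogonality of Q w.r.t. the new weights
  have hQorth : ∀ j, ∀ k < n j,
      ∫ x : ℝ, Q.eval (x : ℂ) * (x : ℂ) ^ k * ((x : ℂ) - z₀) ^ 2 ∂(μ j) = 0 := by
    intro j k hk
    have := hP.2.2 j k hk
    simp only [mul_one] at this
    rw [← this]
    congr 1; funext x
    rw [hPQ]; simp [eval_mul, eval_pow]; ring
  rintro ⟨P', hP', huniq⟩
  -- P' + Q is also type II for the new system
  have hdegP' : P'.natDegree = 2 + Q.natDegree := by rw [hP'.2.1, hdegsum]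
  have hlt : Q.natDegree < P'.natDegree := by omega
  have hltdeg : Q.degree < P'.degree := by
    apply degree_lt_degree hlt
  have key : IsTypeII μ (fun _ x => ((x : ℂ) - z₀) ^ 2) n (P' + Q) := by
    refine ⟨?_, ?_, ?_⟩
    · exact hP'.1.add_of_left hltdeg
    · rw [natDegree_add_eq_left_of_natDegree_lt hlt]
      exact hP'.2.1
    · intro j k hk
      have hint : ∀ R : Polynomial ℂ,
          Integrable (fun x : ℝ => R.eval (x : ℂ) * (x : ℂ) ^ k * ((x : ℂ) - z₀) ^ 2) (μ j) := by
        intro R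
        have := int_poly μ hmom (R * X ^ k * (X - C z₀) ^ 2) j
        simpa [eval_mul, eval_pow] using this
      have hsplit : ∫ x : ℝ, (P' + Q).eval (x : ℂ) * (x : ℂ) ^ k * ((x : ℂ) - z₀) ^ 2 ∂(μ j)
          = (∫ x : ℝ, P'.eval (x : ℂ) * (x : ℂ) ^ k * ((x : ℂ) - z₀) ^ 2 ∂(μ j))
            + ∫ x : ℝ, Q.eval (x : ℂ) * (x : ℂ) ^ k * ((x : ℂ) - z₀) ^ 2 ∂(μ j) := by
        rw [← integral_add (hint P') (hint Q)]
        congr 1; funext x; simp [eval_add]; ring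
      rw [hsplit, hP'.2.2 j k hk, hQorth j k hk, add_zero]
  have := huniq (P' + Q) key
  exact hQne (by simpa using congrArg (· - P') this)
end

section
/- Every Angelesco system is perfect: if μ₁,...,μ_r are finite positive measures on ℝ with infinite supports and all moments finite, supported in intervals Γ₁,...,Γ_r that pairwise intersect in at most one point, then every multi-index n ∈ ℕ^r is normal, i.e., the generalized moment matrix H_n[μ] (the |n|×|n| matrix whose j-th block consists of rows (c^{(j)}_{k-1}, c^{(j)}_k, ..., c^{(j)}_{k+|n|-2}) for k = 1,...,n_j, with c^{(j)}_m = ∫ x^m dμ_j) has nonzero determinant. -/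
open Polynomial MeasureTheory

/-- The (topological) support of a measure on `ℝ`. -/
def msupp (μ : Measure ℝ) : Set ℝ := {x | ∀ U ∈ nhds x, μ U ≠ 0}

lemma ae_msupp (μ : Measure ℝ) : ∀ᵐ x ∂μ, x ∈ msupp μ := by
  rw [ae_iff]
  apply measure_null_of_locally_null
  intro x hx
  simp only [Set.mem_setOf_eq, msupp, not_forall] at hx
  obtain ⟨U, hU, h0⟩ := hx
  exact ⟨U, mem_nhdsWithin_of_mem_nhds hU, by simpa using h0⟩

lemma integrable_eval {μ : Measure ℝ} [IsFiniteMeasure μ]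
    (hmom : ∀ k : ℕ, Integrable (fun x : ℝ => x ^ k) μ)
    (p : Polynomial ℝ) : Integrable (fun x => p.eval x) μ := by
  have h : (fun x : ℝ => p.eval x)
      = fun x => ∑ i ∈ Finset.range (p.natDegree + 1), p.coeff i * x ^ i := by
    funext x; rw [Polynomial.eval_eq_sum_range]
  rw [h]
  exact integrable_finset_sum _ fun i _ => (hmom i).const_mul _

lemma no_root_sign (R : Polynomial ℝ) (x y : ℝ) (hxy : x ≤ y)
    (h : ∀ z ∈ Set.Ioo x y, ¬ R.IsRoot z) : 0 ≤ R.eval x * R.eval y := by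
  by_contra hlt
  push_neg at hlt
  rcases mul_neg_iff.mp hlt with ⟨hx, hy⟩ | ⟨hx, hy⟩
  · obtain ⟨z, hz, hz0⟩ := intermediate_value_Ioo' hxy R.continuous.continuousOn
      (show (0:ℝ) ∈ Set.Ioo (R.eval y) (R.eval x) from ⟨hy, hx⟩)
    exact h z hz hz0
  · obtain ⟨z, hz, hz0⟩ := intermediate_value_Ioo hxy R.continuous.continuousOn
      (show (0:ℝ) ∈ Set.Ioo (R.eval x) (R.eval y) from ⟨hx, hy⟩)
    exact h z hz hz0

lemma noSignChange' (N : ℕ) : ∀ (R : Polynomial ℝ) (s : Set ℝ), s.OrdConnected →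
    R.natDegree ≤ N →
    (∀ z ∈ interior s, R.IsRoot z → Even (Polynomial.rootMultiplicity z R)) →
    ∀ x ∈ s, ∀ y ∈ s, x ≤ y → 0 ≤ R.eval x * R.eval y := by
  induction N with
  | zero =>
    intro R s hs hdeg hroots x hx y hy hxy
    have hR : R = Polynomial.C (R.coeff 0) := Polynomial.eq_C_of_natDegree_le_zero hdeg
    rw [hR]
    simpa using mul_self_nonneg (R.coeff 0)
  | succ N ih =>
    intro R s hs hdeg hroots x hx y hy hxy
    by_cases hR : R = 0
    · simp [hR]
    by_cases hroot : ∃ z ∈ Set.Ioo x y, R.IsRoot z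
    · obtain ⟨z, hzmem, hz⟩ := hroot
      have hIoo : Set.Ioo x y ⊆ interior s :=
        interior_maximal ((Set.Ioo_subset_Icc_self).trans (hs.out hx hy)) isOpen_Ioo
      have hzint : z ∈ interior s := hIoo hzmem
      have hm := hroots z hzint hz
      have hmpos : 0 < Polynomial.rootMultiplicity z R :=
        (Polynomial.rootMultiplicity_pos hR).mpr hz
      set m := Polynomial.rootMultiplicity z R with hmdef
      have hm2 : 2 ≤ m := by rcases hm with ⟨c, hc⟩; omega
      set R₂ := R /ₘ (Polynomial.X - Polynomial.C z) ^ m with hR₂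
      have hfact : (Polynomial.X - Polynomial.C z) ^ m * R₂ = R :=
        Polynomial.pow_mul_divByMonic_rootMultiplicity_eq R z
      set R₁ := (Polynomial.X - Polynomial.C z) ^ (m - 2) * R₂ with hR₁
      have hfact2 : R = (Polynomial.X - Polynomial.C z) ^ 2 * R₁ := by
        rw [hR₁, ← mul_assoc, ← pow_add, show 2 + (m - 2) = m by omega]
        exact hfact.symm
      have hR₁0 : R₁ ≠ 0 := by
        intro h; apply hR; rw [hfact2, h, mul_zero]
      have hXz2 : ((Polynomial.X - Polynomial.C z) ^ 2 : Polynomial ℝ) ≠ 0 :=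
        pow_ne_zero _ (Polynomial.X_sub_C_ne_zero z)
      have hdegR : R.natDegree = 2 + R₁.natDegree := by
        rw [hfact2, Polynomial.natDegree_mul hXz2 hR₁0, Polynomial.natDegree_pow,
          Polynomial.natDegree_X_sub_C]
      have hdeg1 : R₁.natDegree ≤ N := by omega
      have hroots1 : ∀ w ∈ interior s, R₁.IsRoot w →
          Even (Polynomial.rootMultiplicity w R₁) := by
        intro w hw hwroot
        have hmul : Polynomial.rootMultiplicity w R
            = Polynomial.rootMultiplicity w ((Polynomial.X - Polynomial.C z) ^ 2)
              + Polynomial.rootMultiplicity w R₁ := by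
          conv_lhs => rw [hfact2]
          exact Polynomial.rootMultiplicity_mul (by rw [← hfact2]; exact hR)
        have hwR : R.IsRoot w := by
          rw [hfact2]
          simp [Polynomial.IsRoot, hwroot.eq_zero]
        have hevenR := hroots w hw hwR
        by_cases hwz : w = z
        · subst hwz
          rw [Polynomial.rootMultiplicity_X_sub_C_pow] at hmul
          rcases hevenR with ⟨c, hc⟩
          exact ⟨c - 1, by omega⟩
        · have h0 : Polynomial.rootMultiplicity w ((Polynomial.X - Polynomial.C z) ^ 2) = 0 := by
            apply Polynomial.rootMultiplicity_eq_zero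
            simp [Polynomial.IsRoot, sub_eq_zero, hwz]
          rw [h0, zero_add] at hmul
          rw [← hmul]
          exact hevenR
      have h1 := ih R₁ s hs hdeg1 hroots1 x hx y hy hxy
      have hx2 : R.eval x = (x - z) ^ 2 * R₁.eval x := by rw [hfact2]; simp
      have hy2 : R.eval y = (y - z) ^ 2 * R₁.eval y := by rw [hfact2]; simp
      rw [hx2, hy2, show (x - z) ^ 2 * R₁.eval x * ((y - z) ^ 2 * R₁.eval y)
        = (x - z) ^ 2 * (y - z) ^ 2 * (R₁.eval x * R₁.eval y) by ring]
      exact mul_nonneg (mul_nonneg (sq_nonneg _) (sq_nonneg _)) h1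
    · push_neg at hroot
      exact no_root_sign R x y hxy hroot

lemma noSignChange (R : Polynomial ℝ) (s : Set ℝ) (hs : s.OrdConnected)
    (hroots : ∀ z ∈ interior s, R.IsRoot z → Even (Polynomial.rootMultiplicity z R))
    {x y : ℝ} (hx : x ∈ s) (hy : y ∈ s) : 0 ≤ R.eval x * R.eval y := by
  rcases le_total x y with h | h
  · exact noSignChange' R.natDegree R s hs le_rfl hroots x hx y hy h
  · rw [mul_comm]
    exact noSignChange' R.natDegree R s hs le_rfl hroots y hy x hx h

open scoped Classical in
lemma oddroots_card (μ : Measure ℝ) [IsFiniteMeasure μ] (Γ : Set ℝ)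
    (hconn : Γ.OrdConnected) (hsupp : msupp μ ⊆ Γ) (hinf : (msupp μ).Infinite)
    (hmom : ∀ k : ℕ, Integrable (fun x : ℝ => x ^ k) μ)
    (Q : Polynomial ℝ) (hQ : Q ≠ 0) (m : ℕ)
    (horth : ∀ k < m, ∫ x, x ^ k * Q.eval x ∂μ = 0) :
    m ≤ (Q.roots.toFinset.filter
      (fun z => z ∈ interior Γ ∧ Odd (Polynomial.rootMultiplicity z Q))).card := by
  by_contra hcard
  push_neg at hcard
  set T := Q.roots.toFinset.filter
      (fun z => z ∈ interior Γ ∧ Odd (Polynomial.rootMultiplicity z Q)) with hT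
  set P : Polynomial ℝ := ∏ t ∈ T, (Polynomial.X - Polynomial.C t) with hP
  have hPmonic : P.Monic :=
    Polynomial.monic_prod_of_monic _ _ fun t _ => Polynomial.monic_X_sub_C t
  have hP0 : P ≠ 0 := hPmonic.ne_zero
  set R := Q * P with hRdef
  have hR0 : R ≠ 0 := mul_ne_zero hQ hP0
  have hdegP : P.natDegree = T.card := by
    rw [hP, Polynomial.natDegree_prod _ _ (fun t _ => Polynomial.X_sub_C_ne_zero t)]
    simp
  have hPmult : ∀ z, Polynomial.rootMultiplicity z P = if z ∈ T then 1 else 0 := by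
    intro z
    rw [← Polynomial.count_roots, hP, Polynomial.roots_prod_X_sub_C]
    by_cases hz : z ∈ T
    · rw [if_pos hz]
      exact Multiset.count_eq_one_of_mem T.nodup hz
    · rw [if_neg hz]
      exact Multiset.count_eq_zero_of_notMem hz
  have hev : ∀ z ∈ interior Γ, R.IsRoot z → Even (Polynomial.rootMultiplicity z R) := by
    intro z hz hroot
    have hmul : Polynomial.rootMultiplicity z R
        = Polynomial.rootMultiplicity z Q + Polynomial.rootMultiplicity z P :=
      Polynomial.rootMultiplicity_mul (hRdef ▸ hR0)
    rw [hmul, hPmult z]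
    by_cases hzT : z ∈ T
    · rw [if_pos hzT]
      obtain ⟨c, hc⟩ := (Finset.mem_filter.mp hzT).2.2
      exact ⟨c + 1, by omega⟩
    · rw [if_neg hzT, add_zero]
      have hPz : P.eval z ≠ 0 := by
        rw [hP, Polynomial.eval_prod]
        rw [Finset.prod_ne_zero_iff]
        intro t ht
        simp only [Polynomial.eval_sub, Polynomial.eval_X, Polynomial.eval_C, sub_ne_zero]
        rintro rfl
        exact hzT ht
      have hQz : Q.IsRoot z := by
        have h0 : Q.eval z * P.eval z = 0 := by
          have := hroot
          rwa [hRdef, Polynomial.IsRoot, Polynomial.eval_mul] at this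
        rcases mul_eq_zero.mp h0 with h | h
        · exact h
        · exact absurd h hPz
      have hzmem : z ∈ Q.roots.toFinset := by
        rw [Multiset.mem_toFinset, Polynomial.mem_roots hQ]
        exact hQz
      have hnotodd : ¬ Odd (Polynomial.rootMultiplicity z Q) := fun hodd =>
        hzT (Finset.mem_filter.mpr ⟨hzmem, hz, hodd⟩)
      exact Nat.not_odd_iff_even.mp hnotodd
  have hsign := fun {x y} hx hy => noSignChange R Γ hconn hev (x := x) (y := y) hx hy
  have hRint : Integrable (fun x => R.eval x) μ := integrable_eval hmom R
  have hdich : (∀ x ∈ Γ, 0 ≤ R.eval x) ∨ (∀ x ∈ Γ, R.eval x ≤ 0) := by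
    by_cases h : ∀ x ∈ Γ, R.eval x ≤ 0
    · exact Or.inr h
    · left
      push_neg at h
      obtain ⟨x₀, hx₀, hpos⟩ := h
      intro y hy
      have := hsign hx₀ hy
      nlinarith
  have hint : ∫ x, R.eval x ∂μ = 0 := by
    have hexp : ∀ x : ℝ, R.eval x
        = ∑ i ∈ Finset.range (P.natDegree + 1), P.coeff i * (x ^ i * Q.eval x) := by
      intro x
      rw [hRdef, Polynomial.eval_mul, Polynomial.eval_eq_sum_range (p := P), Finset.mul_sum]
      exact Finset.sum_congr rfl fun i _ => by ring
    have hintg : ∀ i : ℕ, Integrable (fun x : ℝ => x ^ i * Q.eval x) μ := by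
      intro i
      have := integrable_eval hmom (Polynomial.X ^ i * Q)
      simpa using this
    calc ∫ x, R.eval x ∂μ
        = ∑ i ∈ Finset.range (P.natDegree + 1), ∫ x, P.coeff i * (x ^ i * Q.eval x) ∂μ := by
          simp_rw [hexp]
          exact integral_finset_sum _ fun i _ => (hintg i).const_mul _
      _ = 0 := by
          apply Finset.sum_eq_zero
          intro i hi
          rw [MeasureTheory.integral_const_mul, horth i (by
            have : i ≤ P.natDegree := Nat.lt_succ_iff.mp (Finset.mem_range.mp hi)
            omega), mul_zero]
  have haezero : (fun x => R.eval x) =ᵐ[μ] 0 := by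
    rcases hdich with hpos | hneg
    · have hnn : 0 ≤ᵐ[μ] fun x => R.eval x := by
        filter_upwards [ae_msupp μ] with x hx using hpos x (hsupp hx)
      exact (integral_eq_zero_iff_of_nonneg_ae hnn hRint).mp hint
    · have hnn : 0 ≤ᵐ[μ] fun x => -R.eval x := by
        filter_upwards [ae_msupp μ] with x hx using neg_nonneg.mpr (hneg x (hsupp hx))
      have hint' : ∫ x, -R.eval x ∂μ = 0 := by rw [integral_neg, hint, neg_zero]
      have h := (integral_eq_zero_iff_of_nonneg_ae hnn hRint.neg).mp hint'
      filter_upwards [h] with x hx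
      simpa using hx
  have hvanish : msupp μ ⊆ {x | R.IsRoot x} := by
    intro x hx
    by_contra hne
    have hUopen : IsOpen {y : ℝ | R.eval y ≠ 0} :=
      isOpen_compl_singleton.preimage R.continuous
    have hU0 : μ {y : ℝ | R.eval y ≠ 0} = 0 := by
      have := haezero
      rw [Filter.EventuallyEq, ae_iff] at this
      simpa using this
    exact hx _ (hUopen.mem_nhds hne) hU0
  exact hR0 (Polynomial.eq_zero_of_infinite_isRoot R (hinf.mono hvanish))

/-- Angelesco systems are perfect: if `μ₁, ..., μ_r` are finite positive measures with
infinite supports and all moments finite, supported in intervals `Γ₁, ..., Γ_r` that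
pairwise intersect in at most one point, then for every multi-index `n` the block moment
matrix `H_n[μ]` (rows indexed by pairs `(j,k)` with `k < n j`, columns by `0,...,|n|-1`,
entry `∫ x^(k+m) dμ_j`) has nonzero determinant. -/
theorem stmt10 (r : ℕ) (μ : Fin r → Measure ℝ) [∀ j, IsFiniteMeasure (μ j)]
    (Γ : Fin r → Set ℝ) (hconn : ∀ j, (Γ j).OrdConnected)
    (hsupp : ∀ j, msupp (μ j) ⊆ Γ j) (hinf : ∀ j, (msupp (μ j)).Infinite)
    (hmom : ∀ j, ∀ k : ℕ, Integrable (fun x : ℝ => x ^ k) (μ j))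
    (hdisj : ∀ i j, i ≠ j → (Γ i ∩ Γ j).Subsingleton)
    (n : Fin r → ℕ) (e : ((j : Fin r) × Fin (n j)) ≃ Fin (∑ j, n j)) :
    (Matrix.of fun p q : (j : Fin r) × Fin (n j) =>
        ∫ x : ℝ, x ^ ((p.2 : ℕ) + (e q : ℕ)) ∂(μ p.1)).det ≠ 0 := by
  classical
  by_cases hN0 : ∑ j, n j = 0
  · haveI : IsEmpty (Fin (∑ j, n j)) := by rw [hN0]; infer_instance
    haveI : IsEmpty ((j : Fin r) × Fin (n j)) := e.isEmpty
    simp [Matrix.det_isEmpty]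
  intro hdet
  obtain ⟨v, hv, hMv⟩ := Matrix.exists_mulVec_eq_zero_iff.mpr hdet
  set w : Fin (∑ j, n j) → ℝ := v ∘ e.symm with hw
  set Q : Polynomial ℝ := ∑ m : Fin (∑ j, n j), Polynomial.C (w m) * Polynomial.X ^ (m : ℕ) with hQdef'
  have hQdef : Q = ∑ q : (j : Fin r) × Fin (n j),
      Polynomial.C (v q) * Polynomial.X ^ ((e q : ℕ)) := by
    rw [hQdef', ← Equiv.sum_comp e (fun m : Fin (∑ j, n j) => Polynomial.C (w m) * Polynomial.X ^ (m : ℕ))]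
    exact Finset.sum_congr rfl fun q _ => by simp [hw]
  have hcoeff : ∀ (k : ℕ) (hk : k < ∑ j, n j), Q.coeff k = w ⟨k, hk⟩ := by
    intro k hk
    rw [hQdef', Polynomial.finset_sum_coeff]
    rw [Finset.sum_eq_single (⟨k, hk⟩ : Fin (∑ j, n j))]
    · simp
    · intro b _ hb
      simp only [Polynomial.coeff_C_mul, Polynomial.coeff_X_pow]
      rw [if_neg (fun h => hb (Fin.ext h.symm)), mul_zero]
    · simp
  have hcoeff' : ∀ k : ℕ, (∑ j, n j) ≤ k → Q.coeff k = 0 := by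
    intro k hk
    rw [hQdef', Polynomial.finset_sum_coeff]
    apply Finset.sum_eq_zero
    intro b _
    simp only [Polynomial.coeff_C_mul, Polynomial.coeff_X_pow]
    rw [if_neg (by omega), mul_zero]
  have hQ0 : Q ≠ 0 := by
    obtain ⟨q, hq⟩ := Function.ne_iff.mp hv
    intro h
    apply hq
    have h1 : Q.coeff (e q) = w ⟨(e q : ℕ), (e q).isLt⟩ := hcoeff _ (e q).isLt
    rw [h] at h1
    simp only [Polynomial.coeff_zero] at h1
    have : w ⟨(e q : ℕ), (e q).isLt⟩ = v q := by
      simp [hw, Fin.eta]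
    rw [this] at h1
    exact h1.symm
  have hdeg : Q.natDegree < ∑ j, n j := by
    rw [Polynomial.natDegree_lt_iff_degree_lt hQ0]
    rw [Polynomial.degree_lt_iff_coeff_zero]
    intro m hm
    exact hcoeff' m (by exact_mod_cast hm)
  have horth : ∀ (j : Fin r) (k : ℕ), k < n j → ∫ x, x ^ k * Q.eval x ∂(μ j) = 0 := by
    intro j k hk
    have hp := congrFun hMv ⟨j, ⟨k, hk⟩⟩
    simp only [Matrix.mulVec, dotProduct, Matrix.of_apply, Pi.zero_apply] at hp
    have hfun : (fun x : ℝ => x ^ k * Q.eval x)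
        = fun x => ∑ q : (j : Fin r) × Fin (n j), v q * x ^ (k + (e q : ℕ)) := by
      funext x
      rw [hQdef, Polynomial.eval_finset_sum, Finset.mul_sum]
      apply Finset.sum_congr rfl
      intro q _
      simp only [Polynomial.eval_mul, Polynomial.eval_C, Polynomial.eval_pow, Polynomial.eval_X]
      rw [pow_add]; ring
    rw [hfun, integral_finset_sum _ (fun q _ => ((hmom j (k + (e q : ℕ))).const_mul _))]
    simp_rw [MeasureTheory.integral_const_mul]
    rw [← hp]
    exact Finset.sum_congr rfl fun q _ => mul_comm _ _
  set T : Fin r → Finset ℝ := fun j => Q.roots.toFinset.filter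
      (fun z => z ∈ interior (Γ j) ∧ Odd (Polynomial.rootMultiplicity z Q)) with hTdef
  have hTcard : ∀ j, n j ≤ (T j).card := fun j =>
    oddroots_card (μ j) (Γ j) (hconn j) (hsupp j) (hinf j) (hmom j) Q hQ0 (n j)
      (fun k hk => horth j k hk)
  have hTdisj : ∀ i ∈ Finset.univ, ∀ j ∈ Finset.univ,
      i ≠ j → Disjoint (T i) (T j) := by
    intro i _ j _ hij
    rw [Finset.disjoint_left]
    intro z hzi hzj
    have h1 : z ∈ interior (Γ i) := (Finset.mem_filter.mp hzi).2.1
    have h2 : z ∈ interior (Γ j) := (Finset.mem_filter.mp hzj).2.1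
    have hop : IsOpen (interior (Γ i) ∩ interior (Γ j)) :=
      isOpen_interior.inter isOpen_interior
    obtain ⟨ε, hε, hball⟩ := Metric.isOpen_iff.mp hop z ⟨h1, h2⟩
    have hmem : ∀ u ∈ Metric.ball z ε, u ∈ Γ i ∩ Γ j := by
      intro u hu
      obtain ⟨hui, huj⟩ := hball hu
      exact ⟨interior_subset hui, interior_subset huj⟩
    have hz1 : z + ε / 2 ∈ Metric.ball z ε := by
      simp only [Metric.mem_ball, Real.dist_eq]
      rw [abs_of_nonneg (by linarith)]
      · linarith
    have := hdisj i j hij (hmem _ (Metric.mem_ball_self hε)) (hmem _ hz1)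
    linarith [this]
  have hsum : (∑ j, n j) ≤ (Finset.univ.biUnion T).card := by
    rw [Finset.card_biUnion hTdisj]
    exact Finset.sum_le_sum fun j _ => hTcard j
  have hsub : Finset.univ.biUnion T ⊆ Q.roots.toFinset := by
    intro z hz
    obtain ⟨j, _, hzj⟩ := Finset.mem_biUnion.mp hz
    exact (Finset.mem_filter.mp hzj).1
  have hfin : (∑ j, n j) ≤ Q.natDegree :=
    le_trans hsum (le_trans (Finset.card_le_card hsub)
      (le_trans (Multiset.toFinset_card_le _) (Polynomial.card_roots' Q)))
  omega
end

section
/- If (μ₁,...,μ_r) is an AT system on a closed interval Γ for the multi-index n (i.e., dμ_j = w_j dμ for a common reference measure μ ∈ M(Γ) and the functions w₁, xw₁, ..., x^{n₁−1}w₁, ..., w_r, ..., x^{n_r−1}w_r form a Chebyshev system on Γ), then the index n is normal: the block moment matrix H_n[μ] has nonzero determinant. -/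
open Polynomial MeasureTheory

/-- `(u 0, ..., u (N-1))` is a Chebyshev system on `Γ`: for every strictly increasing tuple
of points of `Γ` the determinant `det (u i (x j))` is nonzero, with constant sign. -/
def IsChebyshev (N : ℕ) (Γ : Set ℝ) (u : Fin N → ℝ → ℝ) : Prop :=
  ∀ x y : Fin N → ℝ, StrictMono x → StrictMono y →
    (∀ i, x i ∈ Γ) → (∀ i, y i ∈ Γ) →
      0 < (Matrix.of fun i j => u i (x j)).det * (Matrix.of fun i j => u i (y j)).det

/-! By Andréief's identity, `N! · det H` is the `μᴺ`-integral of
`det (u i (x j)) · det (x j ^ k)`, where `u` is the Chebyshev system. Both determinants change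
sign under a permutation of the points, so the integrand is symmetric; it vanishes unless the points
are distinct, and on distinct points of `Γ` it has, after sorting them, the constant sign of the
Chebyshev system. Injective tuples close to `N` distinct points of the support of `μ` carry positive
`μᴺ`-measure, so the integral is nonzero. -/

open Matrix Equiv Filter Topology Function
open scoped Nat

section PermExpansion

variable {α : Type*} {N : ℕ} (f g : Fin N → α → ℝ)

theorem det_mul_prod_eq_sum_perm (x : Fin N → α) :
    (of fun i j => f i (x j)).det * ∏ j, g j (x j)
      = ∑ σ : Perm (Fin N), ((Perm.sign σ : ℤ) : ℝ) * ∏ j, f (σ j) (x j) * g j (x j) := by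
  rw [det_apply', Finset.sum_mul]
  refine Finset.sum_congr rfl fun σ _ => ?_
  rw [Finset.prod_mul_distrib, mul_assoc]
  rfl

theorem sum_perm_det_mul_prod (x : Fin N → α) :
    ∑ τ : Perm (Fin N), (of fun i j => f i ((x ∘ τ) j)).det * ∏ j, g j ((x ∘ τ) j)
      = (of fun i j => f i (x j)).det * (of fun i j => g j (x i)).det := by
  have hperm (τ : Perm (Fin N)) : (of fun i j => f i ((x ∘ τ) j)).det
      = Perm.sign τ * (of fun i j => f i (x j)).det :=
    det_permute' τ (of fun i j => f i (x j))
  simp_rw [hperm, det_apply' (of fun i j => g j (x i)), Finset.mul_sum]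
  refine Finset.sum_congr rfl fun τ _ => ?_
  simp only [of_apply, Function.comp_apply]
  ring

end PermExpansion

section Andreief

variable {α : Type*} [MeasurableSpace α] {μ : Measure α} [SigmaFinite μ] {N : ℕ}

theorem measurePreserving_arrowCongr'_perm (τ : Perm (Fin N)) :
    MeasurePreserving (MeasurableEquiv.arrowCongr' τ.symm (MeasurableEquiv.refl α))
      (Measure.pi fun _ => μ) (Measure.pi fun _ => μ) :=
  measurePreserving_arrowCongr' _ _ τ.symm _ fun _ => .id μ

theorem integral_comp_perm (τ : Perm (Fin N)) (h : (Fin N → α) → ℝ) :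
    ∫ x, h (x ∘ τ) ∂Measure.pi (fun _ => μ) = ∫ x, h x ∂Measure.pi (fun _ => μ) :=
  (measurePreserving_arrowCongr'_perm τ).integral_comp' h

theorem MeasureTheory.Integrable.comp_perm {h : (Fin N → α) → ℝ}
    (hh : Integrable h (Measure.pi fun _ => μ)) (τ : Perm (Fin N)) :
    Integrable (fun x => h (x ∘ τ)) (Measure.pi fun _ => μ) :=
  ((measurePreserving_arrowCongr'_perm τ).integrable_comp_emb
    (MeasurableEquiv.measurableEmbedding _)).mpr hh

variable {f g : Fin N → α → ℝ}

theorem integrable_det_mul_prod (hfg : ∀ i j, Integrable (fun a => f i a * g j a) μ) :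
    Integrable (fun x => (of fun i j => f i (x j)).det * ∏ j, g j (x j))
      (Measure.pi fun _ => μ) := by
  simp_rw [det_mul_prod_eq_sum_perm]
  exact integrable_finsetSum _ fun σ _ =>
    (Integrable.fintype_prod fun j => hfg (σ j) j).const_mul _

theorem integrable_det_mul_det (hfg : ∀ i j, Integrable (fun a => f i a * g j a) μ) :
    Integrable (fun x => (of fun i j => f i (x j)).det * (of fun i j => g j (x i)).det)
      (Measure.pi fun _ => μ) :=
  (integrable_finsetSum _ fun τ _ => (integrable_det_mul_prod hfg).comp_perm τ).congr
    (ae_of_all _ (sum_perm_det_mul_prod f g))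

theorem det_integral_mul_eq_integral_det_mul_prod
    (hfg : ∀ i j, Integrable (fun a => f i a * g j a) μ) :
    (of fun i j => ∫ a, f i a * g j a ∂μ).det
      = ∫ x, (of fun i j => f i (x j)).det * ∏ j, g j (x j) ∂Measure.pi fun _ => μ := by
  simp_rw [det_mul_prod_eq_sum_perm]
  rw [integral_finsetSum _ fun σ _ =>
    (Integrable.fintype_prod fun j => hfg (σ j) j).const_mul _, det_apply']
  refine Finset.sum_congr rfl fun σ _ => ?_
  rw [integral_const_mul, integral_fintype_prod_eq_prod (fun j a => f (σ j) a * g j a)]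
  rfl

theorem andreief (hfg : ∀ i j, Integrable (fun a => f i a * g j a) μ) :
    (N ! : ℝ) * (of fun i j => ∫ a, f i a * g j a ∂μ).det
      = ∫ x, (of fun i j => f i (x j)).det * (of fun i j => g j (x i)).det
          ∂Measure.pi fun _ => μ := by
  set h : (Fin N → α) → ℝ := fun x => (of fun i j => f i (x j)).det * ∏ j, g j (x j)
  calc (N ! : ℝ) * (of fun i j => ∫ a, f i a * g j a ∂μ).det
      = ∑ τ : Perm (Fin N), ∫ x, h (x ∘ τ) ∂Measure.pi fun _ => μ := by
        rw [det_integral_mul_eq_integral_det_mul_prod hfg]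
        simp only [integral_comp_perm, Finset.sum_const, Finset.card_univ, Fintype.card_perm,
          Fintype.card_fin, nsmul_eq_mul]
        rfl
    _ = ∫ x, ∑ τ : Perm (Fin N), h (x ∘ τ) ∂Measure.pi fun _ => μ :=
        (integral_finsetSum _ fun τ _ => (integrable_det_mul_prod hfg).comp_perm τ).symm
    _ = _ := integral_congr_ae (ae_of_all _ (sum_perm_det_mul_prod f g))

end Andreief

theorem Tuple.exists_strictMono_comp_perm {α : Type*} [LinearOrder α] {N : ℕ}
    {x : Fin N → α} (hx : Injective x) : ∃ τ : Perm (Fin N), StrictMono (x ∘ τ) :=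
  ⟨Tuple.sort x, (Tuple.monotone_sort x).strictMono_of_injective (hx.comp (Tuple.sort x).injective)⟩

theorem Matrix.det_vandermonde_pos {R : Type*} [CommRing R] [LinearOrder R] [IsStrictOrderedRing R]
    {N : ℕ} {x : Fin N → R} (hx : StrictMono x) : 0 < (vandermonde x).det := by
  rw [det_vandermonde]
  exact Finset.prod_pos fun i _ => Finset.prod_pos fun j hj =>
    sub_pos.mpr (hx (Finset.mem_Ioi.mp hj))

theorem isOpen_setOf_injective {ι X : Type*} [Finite ι] [TopologicalSpace X] [T2Space X] :
    IsOpen {x : ι → X | Injective x} := by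
  have : {x : ι → X | Injective x} = ⋂ i, ⋂ j, {x | x i = x j → i = j} := by
    ext x; simp [Injective]
  rw [this]
  refine isOpen_iInter_of_finite fun i => isOpen_iInter_of_finite fun j => ?_
  by_cases hij : i = j
  · simp [hij]
  · simpa [hij] using isOpen_ne_fun (continuous_apply i) (continuous_apply j)

section Support

variable {μ : Measure ℝ}

theorem measure_compl_eq_zero_of_msupp_subset {Γ : Set ℝ} (h : msupp μ ⊆ Γ) : μ Γᶜ = 0 :=
  measure_null_of_locally_null _ fun x hx => by
    obtain ⟨U, hU, hU0⟩ : ∃ U ∈ 𝓝 x, μ U = 0 := by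
      simpa [msupp] using fun h' : x ∈ msupp μ => hx (h h')
    exact ⟨U, mem_nhdsWithin_of_mem_nhds hU, hU0⟩

theorem measure_pi_ne_zero_of_mem_msupp {ι : Type*} [Fintype ι] [SigmaFinite μ] {y : ι → ℝ}
    (hy : ∀ i, y i ∈ msupp μ) {U : Set (ι → ℝ)} (hU : U ∈ 𝓝 y) :
    Measure.pi (fun _ => μ) U ≠ 0 := by
  obtain ⟨δ, hδ, hball⟩ := Metric.mem_nhds_iff.mp hU
  refine fun hU0 => ?_
  have := measure_mono_null hball hU0
  rw [ball_pi _ hδ, Measure.pi_pi] at this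
  exact Finset.prod_ne_zero_iff.mpr (fun i _ => hy i _ (Metric.ball_mem_nhds _ hδ)) this

end Support

section Chebyshev

variable {N : ℕ} {Γ : Set ℝ} {u : Fin N → ℝ → ℝ}

/-- The integrand of Andréief's identity for the moment matrix `∫ u i x * x ^ k dμ`. -/
noncomputable def andreiefKernel (u : Fin N → ℝ → ℝ) (x : Fin N → ℝ) : ℝ :=
  (of fun i j => u i (x j)).det * (vandermonde x).det

theorem andreiefKernel_comp_perm (u : Fin N → ℝ → ℝ) (x : Fin N → ℝ) (τ : Perm (Fin N)) :
    andreiefKernel u (x ∘ τ) = andreiefKernel u x := by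
  have hsign : ((Perm.sign τ : ℤ) : ℝ) * (Perm.sign τ : ℤ) = 1 := by
    rw [← Int.cast_mul, ← Units.val_mul, Int.units_mul_self, Units.val_one, Int.cast_one]
  have hu : (of fun i j => u i ((x ∘ τ) j)).det = Perm.sign τ * (of fun i j => u i (x j)).det :=
    det_permute' τ (of fun i j => u i (x j))
  have hV : (vandermonde (x ∘ τ)).det = Perm.sign τ * (vandermonde x).det :=
    det_permute τ (vandermonde x)
  rw [andreiefKernel, andreiefKernel, hu, hV]
  linear_combination (of fun i j => u i (x j)).det * (vandermonde x).det * hsign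

theorem andreiefKernel_eq_zero_of_not_injective (u : Fin N → ℝ → ℝ) {x : Fin N → ℝ}
    (hx : ¬ Injective x) : andreiefKernel u x = 0 := by
  rw [andreiefKernel, det_vandermonde_eq_zero_iff.mpr (Function.not_injective_iff.mp hx), mul_zero]

theorem IsChebyshev.andreiefKernel_mul_pos (hu : IsChebyshev N Γ u) {x y : Fin N → ℝ}
    (hx : Injective x) (hy : Injective y) (hxΓ : ∀ i, x i ∈ Γ) (hyΓ : ∀ i, y i ∈ Γ) :
    0 < andreiefKernel u x * andreiefKernel u y := by
  obtain ⟨σ, hσ⟩ := Tuple.exists_strictMono_comp_perm hx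
  obtain ⟨τ, hτ⟩ := Tuple.exists_strictMono_comp_perm hy
  rw [← andreiefKernel_comp_perm u x σ, ← andreiefKernel_comp_perm u y τ]
  have := mul_pos (hu _ _ hσ hτ (fun i => hxΓ _) (fun i => hyΓ _))
    (mul_pos (det_vandermonde_pos hσ) (det_vandermonde_pos hτ))
  unfold andreiefKernel
  linarith

variable {μ : Measure ℝ} [SigmaFinite μ]

theorem IsChebyshev.integral_andreiefKernel_mul_pos (hu : IsChebyshev N Γ u)
    (hsupp : msupp μ ⊆ Γ) (hint : Integrable (andreiefKernel u) (Measure.pi fun _ => μ))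
    {y : Fin N → ℝ} (hy : Injective y) (hyμ : ∀ i, y i ∈ msupp μ) :
    0 < ∫ x, andreiefKernel u y * andreiefKernel u x ∂Measure.pi fun _ => μ := by
  have hΓ : ∀ᵐ x ∂Measure.pi (fun _ : Fin N => μ), ∀ i, x i ∈ Γ :=
    ae_all_iff.2 fun i => (Measure.tendsto_eval_ae_ae (i := i)).eventually
      (mem_ae_iff.2 (measure_compl_eq_zero_of_msupp_subset hsupp))
  have hpos : ∀ᵐ x ∂Measure.pi (fun _ : Fin N => μ),
      Injective x → 0 < andreiefKernel u y * andreiefKernel u x := by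
    filter_upwards [hΓ] with x hxΓ hx
    exact hu.andreiefKernel_mul_pos hy hx (fun i => hsupp (hyμ i)) hxΓ
  have hnonneg : 0 ≤ᵐ[Measure.pi fun _ => μ] fun x => andreiefKernel u y * andreiefKernel u x := by
    filter_upwards [hpos] with x hx
    by_cases hinj : Injective x
    · exact (hx hinj).le
    · simp [andreiefKernel_eq_zero_of_not_injective u hinj]
  rw [integral_pos_iff_support_of_nonneg_ae hnonneg (hint.const_mul _)]
  calc 0 < (Measure.pi fun _ => μ) {x | Injective x} :=
        pos_iff_ne_zero.2 (measure_pi_ne_zero_of_mem_msupp hyμ (isOpen_setOf_injective.mem_nhds hy))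
    _ ≤ _ := measure_mono_ae (hpos.mono fun x hx hinj => (hx hinj).ne')

theorem IsChebyshev.det_moments_ne_zero (hu : IsChebyshev N Γ u) (hsupp : msupp μ ⊆ Γ)
    (hinf : (msupp μ).Infinite) (hint : ∀ i k, Integrable (fun a => u i a * a ^ k) μ) :
    (of fun i k : Fin N => ∫ a, u i a * a ^ (k : ℕ) ∂μ).det ≠ 0 := by
  have hfg : ∀ i (k : Fin N), Integrable (fun a => u i a * a ^ (k : ℕ)) μ := fun i k => hint i k
  let y : Fin N → ℝ := fun i => hinf.natEmbedding _ i
  have hy : Injective y := Subtype.val_injective.comp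
    ((hinf.natEmbedding _).injective.comp Fin.val_injective)
  have hpos := hu.integral_andreiefKernel_mul_pos hsupp (integrable_det_mul_det hfg) hy
    fun i => (hinf.natEmbedding _ i).2
  have hK : ∫ x, andreiefKernel u x ∂Measure.pi (fun _ => μ)
      = (N ! : ℝ) * (of fun i k : Fin N => ∫ a, u i a * a ^ (k : ℕ) ∂μ).det :=
    (andreief hfg).symm
  intro hdet
  rw [integral_const_mul, hK, hdet, mul_zero, mul_zero] at hpos
  exact hpos.false

end Chebyshev

theorem stmt11_general (r : ℕ) (μ : Measure ℝ) [IsFiniteMeasure μ]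
    (Γ : Set ℝ) (hsupp : msupp μ ⊆ Γ) (hinf : (msupp μ).Infinite)
    (w : Fin r → ℝ → ℝ)
    (hint : ∀ j, ∀ k : ℕ, Integrable (fun x : ℝ => x ^ k * w j x) μ)
    (n : Fin r → ℕ) (e : ((j : Fin r) × Fin (n j)) ≃ Fin (∑ j, n j))
    (hAT : IsChebyshev (∑ j, n j) Γ
      (fun i x => x ^ (((e.symm i).2 : ℕ)) * w (e.symm i).1 x)) :
    (Matrix.of fun p q : (j : Fin r) × Fin (n j) =>
        ∫ x : ℝ, x ^ ((p.2 : ℕ) + (e q : ℕ)) * w p.1 x ∂μ).det ≠ 0 := by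
  set u : Fin (∑ j, n j) → ℝ → ℝ := fun i x => x ^ ((e.symm i).2 : ℕ) * w (e.symm i).1 x
  have hmoments : ∀ i k, Integrable (fun a => u i a * a ^ k) μ := fun i k =>
    (hint (e.symm i).1 ((e.symm i).2 + k)).congr (ae_of_all _ fun a => by simp only [u]; ring)
  have hreindex : (of fun p q : (j : Fin r) × Fin (n j) =>
        ∫ x : ℝ, x ^ ((p.2 : ℕ) + (e q : ℕ)) * w p.1 x ∂μ)
      = (of fun i (k : Fin (∑ j, n j)) => ∫ a, u i a * a ^ (k : ℕ) ∂μ).submatrix e e := by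
    ext p q
    refine integral_congr_ae (ae_of_all _ fun a => ?_)
    simp only [u, pow_add]
    rw [e.symm_apply_apply]
    ring
  rw [hreindex, det_submatrix_equiv_self]
  exact hAT.det_moments_ne_zero hsupp hinf hmoments

/-- AT systems are normal: if `dμ_j = w_j dμ` with `μ` a finite positive measure with
infinite support in the closed interval `Γ`, all moments finite, and the functions
`x^i w_j` (`0 ≤ i ≤ n_j - 1`, `1 ≤ j ≤ r`) form a Chebyshev system on `Γ`, then the block
moment matrix `H_n[μ]` has nonzero determinant. -/
theorem stmt11 (r : ℕ) (μ : Measure ℝ) [IsFiniteMeasure μ]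
    (Γ : Set ℝ) (hclosed : IsClosed Γ) (hconn : Γ.OrdConnected)
    (hsupp : msupp μ ⊆ Γ) (hinf : (msupp μ).Infinite)
    (w : Fin r → ℝ → ℝ) (hw : ∀ j, ContinuousOn (w j) Γ)
    (hint : ∀ j, ∀ k : ℕ, Integrable (fun x : ℝ => x ^ k * w j x) μ)
    (n : Fin r → ℕ) (e : ((j : Fin r) × Fin (n j)) ≃ Fin (∑ j, n j))
    (hAT : IsChebyshev (∑ j, n j) Γ
      (fun i x => x ^ (((e.symm i).2 : ℕ)) * w (e.symm i).1 x)) :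
    (Matrix.of fun p q : (j : Fin r) × Fin (n j) =>
        ∫ x : ℝ, x ^ ((p.2 : ℕ) + (e q : ℕ)) * w p.1 x ∂μ).det ≠ 0 :=
  stmt11_general r μ Γ hsupp hinf w hint n e hAT
end

section
/- Let (μ₁,...,μ_r) be an Angelesco system with supp μ_j ⊆ Γ_j, the intervals Γ_j pairwise intersecting in at most one point. Then for every multi-index n = (n₁,...,n_r), the type II polynomial P_n has exactly n_j simple zeros in the interior of Γ_j for each j, and these account for all |n| zeros of P_n. -/
open Polynomial MeasureTheory
open scoped Classical

/-! For each `j`, let `Q` be the product of the `X - t` over the zeros `t` of `P` in the interior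
of `Γ j` that have odd multiplicity. All zeros of `P * Q` in the interior of `Γ j` then have even
multiplicity, so `P * Q` keeps a constant sign on `Γ j ⊇ supp μ j` and `∫ P Q dμ_j ≠ 0`; by
orthogonality `deg Q ≥ n j`. Hence `P` has at least `n j` distinct zeros in the interior of each
`Γ j`. These interiors are pairwise disjoint and `P` has at most `|n|` zeros, so every one of these
inequalities is an equality. -/

lemma msupp_eq_support (μ : Measure ℝ) : msupp μ = μ.support := by
  ext x
  simp [msupp, Measure.mem_support_iff_forall, pos_iff_ne_zero]

lemma msupp_mem_ae (μ : Measure ℝ) : msupp μ ∈ ae μ :=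
  msupp_eq_support μ ▸ Measure.support_mem_ae

lemma integrable_eval_of_integrable_pow {μ : Measure ℝ}
    (hmom : ∀ k : ℕ, Integrable (fun x : ℝ => x ^ k) μ) (f : ℝ[X]) :
    Integrable (fun x => f.eval x) μ := by
  simp_rw [eval_eq_sum_range]
  exact integrable_finsetSum _ fun k _ => (hmom k).const_mul _

lemma integral_pos_of_nonneg_on_msupp {μ : Measure ℝ} {f : ℝ → ℝ} (hf : Continuous f)
    (hfi : Integrable f μ) (h0 : ∀ x ∈ msupp μ, 0 ≤ f x) {x₀ : ℝ} (hx₀ : x₀ ∈ msupp μ)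
    (hfx₀ : 0 < f x₀) : 0 < ∫ x, f x ∂μ := by
  rw [integral_pos_iff_support_of_nonneg_ae (Filter.eventually_of_mem (msupp_mem_ae μ) h0) hfi]
  exact pos_iff_ne_zero.2 <| hx₀ _ <| hf.isOpen_support.mem_nhds hfx₀.ne'

lemma integral_ne_zero_of_mul_nonneg_on_msupp {μ : Measure ℝ} {f : ℝ → ℝ} (hf : Continuous f)
    (hfi : Integrable f μ) (hsign : ∀ a ∈ msupp μ, ∀ b ∈ msupp μ, 0 ≤ f a * f b) {x₀ : ℝ}
    (hx₀ : x₀ ∈ msupp μ) (hfx₀ : f x₀ ≠ 0) : ∫ x, f x ∂μ ≠ 0 := by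
  have hpos : 0 < ∫ x, f x₀ * f x ∂μ :=
    integral_pos_of_nonneg_on_msupp (by fun_prop) (hfi.const_mul _) (hsign x₀ hx₀) hx₀
      (mul_self_pos.2 hfx₀)
  rw [integral_const_mul] at hpos
  exact right_ne_zero_of_mul hpos.ne'

lemma rootMultiplicity_X_sub_C_pow_eq_ite {R : Type*} [CommRing R] [IsDomain R] (c x : R)
    (m : ℕ) :
    rootMultiplicity x ((X - C c) ^ m) = if x = c then m else 0 := by
  rw [← count_roots, roots_pow, roots_X_sub_C, Multiset.count_nsmul, Multiset.count_singleton]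
  simp

lemma Set.OrdConnected.mul_nonneg_of_ne_zero {I : Set ℝ} (hI : I.OrdConnected) {f : ℝ → ℝ}
    (hf : ContinuousOn f I) (h : ∀ x ∈ I, f x ≠ 0) {a b : ℝ} (ha : a ∈ I) (hb : b ∈ I) :
    0 ≤ f a * f b := by
  by_contra! hneg
  have h0 : (0 : ℝ) ∈ Set.uIcc (f a) (f b) := by
    rcases mul_neg_iff.1 hneg with ⟨h1, h2⟩ | ⟨h1, h2⟩
    · exact Set.mem_uIcc.2 (Or.inr ⟨h2.le, h1.le⟩)
    · exact Set.mem_uIcc.2 (Or.inl ⟨h1.le, h2.le⟩)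
  obtain ⟨c, hc, hc0⟩ := intermediate_value_uIcc (hf.mono (hI.uIcc_subset ha hb)) h0
  exact h c (hI.uIcc_subset ha hb hc) hc0

lemma Set.OrdConnected.eval_mul_eval_nonneg_of_even_rootMultiplicity {f : ℝ[X]} {I : Set ℝ}
    (hI : I.OrdConnected) (hev : ∀ x ∈ I, Even (rootMultiplicity x f)) {a b : ℝ}
    (ha : a ∈ I) (hb : b ∈ I) : 0 ≤ f.eval a * f.eval b := by
  induction hd : f.natDegree using Nat.strong_induction_on generalizing f with
  | _ d ih =>
  by_cases hroot : ∃ c ∈ I, f.IsRoot c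
  swap
  · push Not at hroot
    exact hI.mul_nonneg_of_ne_zero f.continuous.continuousOn hroot ha hb
  obtain ⟨c, hc, hfc⟩ := hroot
  rcases eq_or_ne f 0 with rfl | hf
  · simp
  obtain ⟨g, hfg, -⟩ := exists_eq_pow_rootMultiplicity_mul_and_not_dvd f hf c
  set m := rootMultiplicity c f
  have hm : 0 < m := (rootMultiplicity_pos hf).2 hfc
  have hg : g ≠ 0 := by rintro rfl; exact hf (by simpa using hfg)
  have hdeg : g.natDegree < d := by
    rw [← hd, hfg, natDegree_mul (pow_ne_zero _ (X_sub_C_ne_zero c)) hg, natDegree_pow,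
      natDegree_X_sub_C]
    omega
  have hgev : ∀ x ∈ I, Even (rootMultiplicity x g) := fun x hx => by
    have hfx := hev x hx
    rw [hfg, rootMultiplicity_mul (hfg ▸ hf), rootMultiplicity_X_sub_C_pow_eq_ite] at hfx
    refine (Nat.even_add.1 hfx).1 ?_
    split_ifs with hxc
    · exact hev c hc
    · exact Even.zero
  have hm_even : Even m := hev c hc
  calc 0 ≤ ((a - c) ^ m * (b - c) ^ m) * (g.eval a * g.eval b) :=
        mul_nonneg (mul_nonneg (hm_even.pow_nonneg _) (hm_even.pow_nonneg _)) (ih _ hdeg hgev rfl)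
    _ = f.eval a * f.eval b := by
        rw [hfg]
        simp only [eval_mul, eval_pow, eval_sub, eval_X, eval_C]
        ring

lemma mul_nonneg_of_mem_closure {X : Type*} [TopologicalSpace X] {f : X → ℝ} (hf : Continuous f)
    {s : Set X} (h : ∀ a ∈ s, ∀ b ∈ s, 0 ≤ f a * f b) {a b : X} (ha : a ∈ closure s)
    (hb : b ∈ closure s) : 0 ≤ f a * f b := by
  have hcl : closure (s ×ˢ s) ⊆ {p : X × X | 0 ≤ f p.1 * f p.2} :=
    closure_minimal (fun p hp => h _ hp.1 _ hp.2)
      (isClosed_le continuous_const ((hf.comp continuous_fst).mul (hf.comp continuous_snd)))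
  exact hcl (show (a, b) ∈ closure (s ×ˢ s) by rw [closure_prod_eq]; exact ⟨ha, hb⟩)

lemma Set.OrdConnected.subset_closure_interior {s : Set ℝ} (hs : s.OrdConnected)
    (hnt : s.Nontrivial) : s ⊆ closure (interior s) := by
  obtain ⟨a, ha, b, hb, hab⟩ := hnt.exists_lt
  have hint : (interior s).Nonempty :=
    ((Set.nonempty_Ioo.2 hab).mono (interior_maximal (Set.Ioo_subset_Icc_self.trans
      (hs.out ha hb)) isOpen_Ioo))
  rw [(hs.convex (𝕜 := ℝ)).closure_interior_eq_closure_of_nonempty_interior hint]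
  exact subset_closure

lemma even_rootMultiplicity_mul_prod_odd_roots {R : Type*} [CommRing R] [IsDomain R]
    {f : R[X]} (hf : f ≠ 0) (s : Set R) {x : R} (hx : x ∈ s) :
    Even (rootMultiplicity x (f * ∏ t ∈ f.roots.toFinset.filter
      (fun t => t ∈ s ∧ Odd (rootMultiplicity t f)), (X - C t))) := by
  set T := f.roots.toFinset.filter (fun t => t ∈ s ∧ Odd (rootMultiplicity t f))
  have hQ : ∏ t ∈ T, (X - C t) ≠ 0 := Finset.prod_ne_zero_iff.2 fun t _ => X_sub_C_ne_zero t
  rw [rootMultiplicity_mul (mul_ne_zero hf hQ), ← count_roots (∏ t ∈ T, (X - C t)),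
    roots_prod_X_sub_C, Multiset.count_eq_of_nodup T.nodup]
  split_ifs with hxT
  · exact (Finset.mem_filter.1 hxT).2.2.add_one
  · rw [add_zero]
    refine Nat.not_odd_iff_even.1 fun hodd => hxT (Finset.mem_filter.2 ⟨?_, hx, hodd⟩)
    exact Multiset.mem_toFinset.2 ((mem_roots hf).2 ((rootMultiplicity_pos hf).1 hodd.pos))

lemma integral_eval_mul_eq_zero_of_natDegree_lt {μ : Measure ℝ}
    (hmom : ∀ k : ℕ, Integrable (fun x : ℝ => x ^ k) μ) {P Q : ℝ[X]} {m : ℕ}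
    (horth : ∀ k < m, ∫ x, P.eval x * x ^ k ∂μ = 0) (hQ : Q.natDegree < m) :
    ∫ x, (P * Q).eval x ∂μ = 0 := by
  have hterm (k : ℕ) : Integrable (fun x => P.eval x * x ^ k) μ := by
    have h := integrable_eval_of_integrable_pow hmom (P * X ^ k)
    simpa only [eval_mul, eval_pow, eval_X] using h
  simp_rw [eval_mul, eval_eq_sum_range (p := Q), Finset.mul_sum, mul_left_comm (P.eval _)]
  rw [integral_finsetSum _ fun k _ => (hterm k).const_mul _]
  refine Finset.sum_eq_zero fun k hk => ?_
  rw [integral_const_mul, horth k (by have := Finset.mem_range.1 hk; omega), mul_zero]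

theorem le_card_roots_filter_interior_of_orthogonal {μ : Measure ℝ} {Γ : Set ℝ}
    (hΓ : Γ.OrdConnected) (hsupp : msupp μ ⊆ Γ) (hinf : (msupp μ).Infinite)
    (hmom : ∀ k : ℕ, Integrable (fun x : ℝ => x ^ k) μ) {P : ℝ[X]} (hP : P ≠ 0) {m : ℕ}
    (horth : ∀ k < m, ∫ x, P.eval x * x ^ k ∂μ = 0) :
    m ≤ (P.roots.toFinset.filter (· ∈ interior Γ)).card := by
  by_contra! hlt
  set T := P.roots.toFinset.filter (fun t => t ∈ interior Γ ∧ Odd (rootMultiplicity t P))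
  set f := P * ∏ t ∈ T, (X - C t)
  have hf : f ≠ 0 := mul_ne_zero hP (Finset.prod_ne_zero_iff.2 fun t _ => X_sub_C_ne_zero t)
  have hTdeg : (∏ t ∈ T, (X - C t)).natDegree < m := by
    rw [natDegree_prod _ _ fun t _ => X_sub_C_ne_zero t]
    simp only [natDegree_X_sub_C, Finset.sum_const, smul_eq_mul, mul_one]
    exact (Finset.card_le_card (Finset.monotone_filter_right _ fun _ _ ht => ht.1)).trans_lt hlt
  have hΓ_sub : Γ ⊆ closure (interior Γ) := hΓ.subset_closure_interior (hinf.nontrivial.mono hsupp)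
  have hsign : ∀ a ∈ msupp μ, ∀ b ∈ msupp μ, 0 ≤ f.eval a * f.eval b := fun a ha b hb =>
    mul_nonneg_of_mem_closure f.continuous
      (fun a ha b hb => hΓ.interior.eval_mul_eval_nonneg_of_even_rootMultiplicity
        (fun x hx => even_rootMultiplicity_mul_prod_odd_roots hP _ hx) ha hb)
      (hΓ_sub (hsupp ha)) (hΓ_sub (hsupp hb))
  obtain ⟨x₀, hx₀, hfx₀⟩ := (hinf.sdiff (finite_setOfPred_isRoot hf)).nonempty
  exact integral_ne_zero_of_mul_nonneg_on_msupp f.continuous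
    (integrable_eval_of_integrable_pow hmom f) hsign hx₀ hfx₀
    (integral_eval_mul_eq_zero_of_natDegree_lt hmom horth hTdeg)

lemma Multiset.card_eq_sum_and_nodup_of_card_le_sum {ι α : Type*} [Fintype ι] {s : Multiset α}
    {p : ι → α → Prop} (hp : _root_.Pairwise fun i j => ∀ x, p i x → ¬ p j x) {n : ι → ℕ}
    (hcard : card s ≤ ∑ i, n i) (hle : ∀ i, n i ≤ (s.toFinset.filter (p i)).card) :
    card s = ∑ i, n i ∧ s.Nodup ∧ ∀ i, card (s.filter (p i)) = n i := by
  set S := s.toFinset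
  have hdisj : ((Finset.univ : Finset ι) : Set ι).PairwiseDisjoint fun i => S.filter (p i) :=
    fun i _ j _ hij => Finset.disjoint_filter.2 fun x _ => hp hij x
  have hsum : ∑ i, (S.filter (p i)).card ≤ S.card := by
    rw [← Finset.card_biUnion hdisj]
    exact Finset.card_le_card (Finset.biUnion_subset.2 fun i _ => Finset.filter_subset _ _)
  have hS : S.card ≤ card s := Multiset.toFinset_card_le s
  have hn : ∑ i, n i ≤ ∑ i, (S.filter (p i)).card := Finset.sum_le_sum fun i _ => hle i
  have hnodup : s.Nodup :=
    Multiset.toFinset_card_eq_card_iff_nodup.1 (show S.card = card s by omega)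
  refine ⟨by omega, hnodup, fun i => ?_⟩
  have heq := (Finset.sum_eq_sum_iff_of_le fun i _ => hle i).1 (by omega) i (Finset.mem_univ i)
  rw [heq, ← Multiset.toFinset_filter, Multiset.toFinset_card_of_nodup (hnodup.filter _)]

theorem stmt13_general (r : ℕ) (μ : Fin r → Measure ℝ)
    (Γ : Fin r → Set ℝ) (hconn : ∀ j, (Γ j).OrdConnected)
    (hsupp : ∀ j, msupp (μ j) ⊆ Γ j) (hinf : ∀ j, (msupp (μ j)).Infinite)
    (hmom : ∀ j, ∀ k : ℕ, Integrable (fun x : ℝ => x ^ k) (μ j))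
    (hdisj : ∀ i j, i ≠ j → (Γ i ∩ Γ j).Subsingleton)
    (n : Fin r → ℕ) (P : Polynomial ℝ) (hPm : P.Monic) (hPdeg : P.natDegree = ∑ j, n j)
    (horth : ∀ j, ∀ k < n j, ∫ x : ℝ, P.eval x * x ^ k ∂(μ j) = 0) :
    Multiset.card P.roots = ∑ j, n j ∧ P.roots.Nodup ∧
      ∀ j, Multiset.card (P.roots.filter (fun t => t ∈ interior (Γ j))) = n j := by
  have hinterior : Pairwise fun i j => ∀ x, x ∈ interior (Γ i) → x ∉ interior (Γ j) :=
    fun i j hij x hi hj => by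
      have hempty : interior (Γ i ∩ Γ j) = ∅ := ((hdisj i j hij).isAntichain _).interior_eq_empty
      rw [interior_inter] at hempty
      exact hempty.subset ⟨hi, hj⟩
  exact Multiset.card_eq_sum_and_nodup_of_card_le_sum hinterior (hPdeg ▸ P.card_roots')
    fun j => le_card_roots_filter_interior_of_orthogonal (hconn j) (hsupp j) (hinf j) (hmom j)
      hPm.ne_zero (horth j)

/-- Zero location for type II polynomials of Angelesco systems: all `|n|` zeros of `P_n`
are real and simple, and exactly `n j` of them lie in the interior of `Γ j`, for each `j`. -/
theorem stmt13 (r : ℕ) (μ : Fin r → Measure ℝ) [∀ j, IsFiniteMeasure (μ j)]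
    (Γ : Fin r → Set ℝ) (hconn : ∀ j, (Γ j).OrdConnected)
    (hsupp : ∀ j, msupp (μ j) ⊆ Γ j) (hinf : ∀ j, (msupp (μ j)).Infinite)
    (hmom : ∀ j, ∀ k : ℕ, Integrable (fun x : ℝ => x ^ k) (μ j))
    (hdisj : ∀ i j, i ≠ j → (Γ i ∩ Γ j).Subsingleton)
    (n : Fin r → ℕ) (P : Polynomial ℝ) (hPm : P.Monic) (hPdeg : P.natDegree = ∑ j, n j)
    (horth : ∀ j, ∀ k < n j, ∫ x : ℝ, P.eval x * x ^ k ∂(μ j) = 0) :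
    Multiset.card P.roots = ∑ j, n j ∧ P.roots.Nodup ∧
      ∀ j, Multiset.card (P.roots.filter (fun t => t ∈ interior (Γ j))) = n j :=
  stmt13_general r μ Γ hconn hsupp hinf hmom hdisj n P hPm hPdeg horth
end

section
/- Generalized Andreief identity: let (X, Σ, μ) be a probability space, φ_1,...,φ_M, ψ_1,...,ψ_N ∈ L²(μ) with N ≥ M ≥ 1, and let A be an (N−M)×N real (or complex) matrix. Then the determinant of the N×N matrix whose top (N−M)×N block is A and whose bottom M×N block has entries ∫ φ_j(x)ψ_k(x)dμ(x) (for 1 ≤ j ≤ M, 1 ≤ k ≤ N) equals (1/M!) ∫_{X^M} det(of the N×N matrix with top block A and bottom block (ψ_k(x_j))_{j,k}) · det(φ_l(x_j))_{l,j=1}^M dμ(x_1)···dμ(x_M). -/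
/-!
Expanding `det (φ_l (x_j))` by Leibniz and multiplying row `j` of the bottom block by
`φ_{σ j} (x_j)` writes the integrand as `∑_σ sgn σ · det(A; φ_{σ j}(x_j) ψ_k(x_j))`. In each
of these determinants row `j` depends only on `x_j`, so by multilinearity and Fubini the
integral can be taken row by row, giving `det(A; ∫ φ_{σ j} ψ_k)`. Undoing the row permutation
`σ` costs another `sgn σ`, so all `M!` terms equal the left-hand side.
-/

open MeasureTheory

/-- Stack a `K × (K+M)` matrix on top of an `M × (K+M)` matrix, giving a square
`(K+M) × (K+M)` matrix. -/
def stack {K M : ℕ} (A : Matrix (Fin K) (Fin (K + M)) ℝ)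
    (B : Matrix (Fin M) (Fin (K + M)) ℝ) : Matrix (Fin (K + M)) (Fin (K + M)) ℝ :=
  Matrix.of fun i j => Sum.elim (fun a => A a j) (fun b => B b j) (finSumFinEquiv.symm i)

section Stack

variable {K M : ℕ} (A : Matrix (Fin K) (Fin (K + M)) ℝ) (B : Matrix (Fin M) (Fin (K + M)) ℝ)

lemma det_stack :
    (stack A B).det = ∑ τ : Equiv.Perm (Fin K ⊕ Fin M),
      (Equiv.Perm.sign τ : ℝ) *
        ((∏ a, A a (finSumFinEquiv (τ (Sum.inl a)))) *
          ∏ j, B j (finSumFinEquiv (τ (Sum.inr j)))) := by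
  rw [← Matrix.det_submatrix_equiv_self finSumFinEquiv (stack A B), ← Matrix.det_transpose,
    Matrix.det_apply']
  refine Finset.sum_congr rfl fun τ _ => ?_
  rw [Fintype.prod_sum_type]
  simp [stack, Matrix.submatrix]

lemma det_stack_mul_rows (c : Fin M → ℝ) :
    (stack A (Matrix.of fun j k => c j * B j k)).det = (∏ j, c j) * (stack A B).det := by
  let v : Fin (K + M) → ℝ := fun i => Sum.elim (fun _ => 1) c (finSumFinEquiv.symm i)
  have hstack : stack A (Matrix.of fun j k => c j * B j k)
      = Matrix.of fun i k => v i * stack A B i k := by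
    ext i k
    rcases h : finSumFinEquiv.symm i <;> simp [stack, v, h]
  have hv : ∏ i, v i = ∏ j, c j := by
    rw [← finSumFinEquiv.prod_comp, Fintype.prod_sum_type]
    simp [v]
  rw [hstack, Matrix.det_mul_column, hv]

lemma det_stack_submatrix (σ : Equiv.Perm (Fin M)) :
    (stack A (B.submatrix σ id)).det = Equiv.Perm.sign σ * (stack A B).det := by
  let ρ : Equiv.Perm (Fin (K + M)) :=
    finSumFinEquiv.symm.trans ((Equiv.sumCongr 1 σ).trans finSumFinEquiv)
  have hstack : stack A (B.submatrix σ id) = (stack A B).submatrix ρ id := by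
    ext i k
    rcases h : finSumFinEquiv.symm i <;> simp [stack, ρ, h]
  rw [hstack, Matrix.det_permute]
  simp [ρ, Equiv.Perm.sign_sumCongr]

end Stack

section RowwiseIntegral

variable {X : Type*} [MeasurableSpace X] (μ : Measure X) [SigmaFinite μ] {K M : ℕ}
  (A : Matrix (Fin K) (Fin (K + M)) ℝ) {f : Fin M → Fin (K + M) → X → ℝ}

lemma integrable_det_stack_rowwise (hf : ∀ j k, Integrable (f j k) μ) :
    Integrable (fun x : Fin M → X => (stack A (Matrix.of fun j k => f j k (x j))).det)
      (Measure.pi fun _ => μ) := by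
  simp only [det_stack, Matrix.of_apply]
  exact integrable_finsetSum _ fun τ _ =>
    ((Integrable.fintype_prod fun j => hf j (finSumFinEquiv (τ (Sum.inr j)))).const_mul _).const_mul
      _

lemma integral_det_stack_rowwise (hf : ∀ j k, Integrable (f j k) μ) :
    ∫ x : Fin M → X, (stack A (Matrix.of fun j k => f j k (x j))).det ∂(Measure.pi fun _ => μ)
      = (stack A (Matrix.of fun j k => ∫ y, f j k y ∂μ)).det := by
  have hterm : ∀ τ : Equiv.Perm (Fin K ⊕ Fin M), Integrable
      (fun x : Fin M → X => ∏ j, f j (finSumFinEquiv (τ (Sum.inr j))) (x j))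
      (Measure.pi fun _ => μ) :=
    fun τ => Integrable.fintype_prod fun j => hf j _
  simp only [det_stack, Matrix.of_apply]
  rw [integral_finsetSum _ fun τ _ => ((hterm τ).const_mul _).const_mul _]
  refine Finset.sum_congr rfl fun τ _ => ?_
  rw [integral_const_mul, integral_const_mul, integral_fintype_prod_eq_prod]

end RowwiseIntegral

theorem stmt19_general {X : Type*} [MeasurableSpace X] (μ : Measure X) [IsProbabilityMeasure μ]
    (M K : ℕ)
    (φ : Fin M → X → ℝ) (ψ : Fin (K + M) → X → ℝ)
    (hφ : ∀ j, MemLp (φ j) 2 μ) (hψ : ∀ k, MemLp (ψ k) 2 μ)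
    (A : Matrix (Fin K) (Fin (K + M)) ℝ) :
    (stack A (Matrix.of fun j k => ∫ x, φ j x * ψ k x ∂μ)).det
      = ((Nat.factorial M : ℝ))⁻¹ *
        ∫ x : Fin M → X,
          (stack A (Matrix.of fun j k => ψ k (x j))).det *
            (Matrix.of fun l j => φ l (x j)).det
          ∂(Measure.pi fun _ : Fin M => μ) := by
  set G := Matrix.of fun j k => ∫ x, φ j x * ψ k x ∂μ
  have hint : ∀ j k, Integrable (fun y => φ j y * ψ k y) μ :=
    fun j k => (hφ j).integrable_mul (hψ k)
  have hexpand : ∀ x : Fin M → X,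
      (stack A (Matrix.of fun j k => ψ k (x j))).det * (Matrix.of fun l j => φ l (x j)).det
        = ∑ σ : Equiv.Perm (Fin M), (Equiv.Perm.sign σ : ℝ) *
            (stack A (Matrix.of fun j k => φ (σ j) (x j) * ψ k (x j))).det := by
    intro x
    rw [Matrix.det_apply' (Matrix.of _), Finset.mul_sum]
    refine Finset.sum_congr rfl fun σ _ => ?_
    have hrows := det_stack_mul_rows A (Matrix.of fun j k => ψ k (x j)) fun j => φ (σ j) (x j)
    simp only [Matrix.of_apply] at hrows ⊢
    rw [hrows]
    ring
  have hterm : ∀ σ : Equiv.Perm (Fin M), ∫ x : Fin M → X, (Equiv.Perm.sign σ : ℝ) *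
      (stack A (Matrix.of fun j k => φ (σ j) (x j) * ψ k (x j))).det ∂(Measure.pi fun _ => μ)
        = (stack A G).det := by
    intro σ
    rw [integral_const_mul, integral_det_stack_rowwise μ A fun j => hint (σ j),
      show (Matrix.of fun j k => ∫ y, φ (σ j) y * ψ k y ∂μ) = G.submatrix σ id from rfl,
      det_stack_submatrix, ← mul_assoc, ← Int.cast_mul, ← Units.val_mul, Int.units_mul_self]
    simp
  rw [integral_congr_ae (Filter.Eventually.of_forall hexpand),
    integral_finsetSum _ fun σ _ =>
      (integrable_det_stack_rowwise μ A fun j => hint (σ j)).const_mul _]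
  simp only [hterm, Finset.sum_const, Finset.card_univ, Fintype.card_perm, Fintype.card_fin,
    nsmul_eq_mul]
  field_simp

/-- Generalized Andreief identity: for a probability measure `μ`, functions
`φ_1, ..., φ_M, ψ_1, ..., ψ_N ∈ L²(μ)` with `N = K + M ≥ M ≥ 1`, and a `K × N` matrix `A`,
the determinant of the `N × N` matrix whose top block is `A` and whose bottom block has
entries `∫ φ_j ψ_k dμ` equals
`(1/M!) ∫_{X^M} det(top block A, bottom block (ψ_k(x_j))) · det(φ_l(x_j)) dμ^M`. -/
theorem stmt19 {X : Type*} [MeasurableSpace X] (μ : Measure X) [IsProbabilityMeasure μ]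
    (M K : ℕ) (hM : 1 ≤ M)
    (φ : Fin M → X → ℝ) (ψ : Fin (K + M) → X → ℝ)
    (hφ : ∀ j, MemLp (φ j) 2 μ) (hψ : ∀ k, MemLp (ψ k) 2 μ)
    (A : Matrix (Fin K) (Fin (K + M)) ℝ) :
    (stack A (Matrix.of fun j k => ∫ x, φ j x * ψ k x ∂μ)).det
      = ((Nat.factorial M : ℝ))⁻¹ *
        ∫ x : Fin M → X,
          (stack A (Matrix.of fun j k => ψ k (x j))).det *
            (Matrix.of fun l j => φ l (x j)).det
          ∂(Measure.pi fun _ : Fin M => μ) :=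
  stmt19_general μ M K φ ψ hφ hψ A
end
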